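/- arXiv:1503.05381 — 4 statements merged into one kernel-verified Lean document; each statement's English description precedes it below -/
import Mathlib

section
/- Let μ be a probability measure on ℝ^d, {D_t} a family of trimmed regions for μ with associated trimmed σ-algebras F_t, and g: ℝ^d → [0,∞) Borel and square-integrable w.r.t. μ. For t ∈ (0,1) set g_t(x) = g(x) for x ∈ D_t and g_t(x) = G_t for x ∈ Q_t (so that g_t is a version of the conditional expectation E_μ[g | F_t]). Then for all 0 < s < t < 1 and every bounded F_s-measurable function α, one has ∫_{ℝ^d} α (g_t² − g_s²) dμ = ∫_{D_t \ D_s} α(x) (g(x) − G_{τ(x)})² μ(dx). -/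
open MeasureTheory Set Real Filter

noncomputable section

/-- A family of *trimmed regions* for a probability measure `μ` on `ℝ^d`:
closed sets `D t`, `t ∈ [0,1]`, nondecreasing, with `μ (D 0) = 0`, `μ (D t) < 1`
for `t < 1`, `D 1 = ℝ^d`, left jumps `μ`-null, and right-continuity. -/
structure TrimmedFamily (d : ℕ) (μ : Measure (Fin d → ℝ)) : Type where
  D : ℝ → Set (Fin d → ℝ)
  isClosed : ∀ t ∈ Icc (0:ℝ) 1, IsClosed (D t)
  mono : ∀ s t : ℝ, 0 ≤ s → s ≤ t → t ≤ 1 → D s ⊆ D t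
  null_zero : μ (D 0) = 0
  meas_lt_one : ∀ t : ℝ, 0 ≤ t → t < 1 → μ (D t) < 1
  one_eq_univ : D 1 = univ
  left_jump_null : ∀ t : ℝ, 0 < t → t ≤ 1 → μ (D t \ ⋃ s ∈ Ico (0:ℝ) t, D s) = 0
  right_cont : ∀ t : ℝ, 0 ≤ t → t < 1 → D t = ⋂ s ∈ Ioc t (1:ℝ), D s

namespace TrimmedFamily

variable {d : ℕ} {μ : Measure (Fin d → ℝ)} (T : TrimmedFamily d μ)

/-- `Q t = ℝ^d \ D t`. -/
def Q (t : ℝ) : Set (Fin d → ℝ) := (T.D t)ᶜ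

/-- `τ(x) = inf {t ∈ [0,1] : x ∈ D t}`. -/
def tau (x : Fin d → ℝ) : ℝ := sInf {t | t ∈ Icc (0:ℝ) 1 ∧ x ∈ T.D t}

/-- `μ_t = μ(Q_t)` (as a real number). -/
def muQ (t : ℝ) : ℝ := (μ (T.Q t)).toReal

/-- `G_t = (1/μ(Q_t)) ∫_{Q_t} g dμ`. -/
def G (g : (Fin d → ℝ) → ℝ) (t : ℝ) : ℝ := (∫ y in T.Q t, g y ∂μ) / T.muQ t

end TrimmedFamily

/-- The entropy `Ent_μ g = ∫ g log g dμ − (∫ g dμ) log (∫ g dμ)`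
(with the convention `0 log 0 = 0`, which is automatic since `Real.log 0 = 0`). -/
def entropy {α : Type*} [MeasurableSpace α] (μ : Measure α) (g : α → ℝ) : ℝ :=
  (∫ x, g x * Real.log (g x) ∂μ) - (∫ x, g x ∂μ) * Real.log (∫ x, g x ∂μ)

/-- The trimmed σ-algebra `F_t`: Borel sets `A` with `μ (A ∩ Q_t) = 0` or `μ (Q_t \ A) = 0`. -/
def trimmedMS {d : ℕ} (μ : Measure (Fin d → ℝ)) (Qt : Set (Fin d → ℝ)) :
    MeasurableSpace (Fin d → ℝ) where
  MeasurableSet' A := MeasurableSet A ∧ (μ (A ∩ Qt) = 0 ∨ μ (Qt \ A) = 0)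
  measurableSet_empty := ⟨MeasurableSet.empty, Or.inl (by simp)⟩
  measurableSet_compl := by
    rintro A ⟨hA, h⟩
    refine ⟨hA.compl, ?_⟩
    rcases h with h | h
    · exact Or.inr (by rwa [show Qt \ Aᶜ = A ∩ Qt by ext x; simp [Set.mem_diff, and_comm]])
    · exact Or.inl (by rwa [show Aᶜ ∩ Qt = Qt \ A by ext x; simp [Set.mem_diff, and_comm]])
  measurableSet_iUnion := by
    intro s hs
    refine ⟨MeasurableSet.iUnion fun i => (hs i).1, ?_⟩
    by_cases h : ∀ i, μ (s i ∩ Qt) = 0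
    · refine Or.inl ?_
      rw [Set.iUnion_inter]
      exact measure_iUnion_null h
    · push_neg at h
      obtain ⟨i, hi⟩ := h
      exact Or.inr (measure_mono_null (Set.diff_subset_diff_right (Set.subset_iUnion s i))
        ((hs i).2.resolve_left hi))

/-!
Since `α` is `F_s`-measurable it is a.e. constant on `Q_s`, and `g_t = g_s = g` on `D_s`; so,
with `Φ u = μ_u G_u²`, the claim reduces to
`∫_{D_t \ D_s} (g - G_τ)² dμ = ∫_{D_t \ D_s} g² dμ + Φ t - Φ s`.
For `a ≤ b` there is the exact identity
`Φ b - Φ a = ∫_{D_b \ D_a} (G_a² - 2 G_a g) dμ + μ_b (G_b - G_a)²`.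
As `τ` has no atoms in `[0, 1)`, `u ↦ G_u` is continuous there. On the slab `D_b \ D_a` we have
`τ ∈ [a, b]`, so if `|G| ≤ M` and `G` oscillates by at most `ε` on `[a, b]`, replacing `G_a` by
`G_τ` and dropping `μ_b (G_b - G_a)²` costs at most `3ε ∫_{D_b \ D_a} (M + |g|) dμ`.
Summing over fine partitions of `[s, t]` gives the identity.
-/

open Topology

theorem eq_of_forall_abs_sub_le_mul_sub {K V : ℝ → ℝ} {s t : ℝ} (hst : s ≤ t)
    (h : ∀ ε > 0, ∃ δ > 0, ∀ a b, s ≤ a → a ≤ b → b ≤ t → b - a ≤ δ →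
      |K b - K a| ≤ ε * (V b - V a)) :
    K t = K s := by
  have hbound : ∀ ε > 0, |K t - K s| ≤ ε * (V t - V s) := by
    intro ε hε
    obtain ⟨δ, hδ, hKV⟩ := h ε hε
    have chain : ∀ n : ℕ, ∀ a b, s ≤ a → a ≤ b → b ≤ t → b - a ≤ n * δ →
        |K b - K a| ≤ ε * (V b - V a) := by
      intro n
      induction n with
      | zero =>
        intro a b _ hab _ hba
        obtain rfl : b = a := le_antisymm (by simpa using hba) hab
        simp
      | succ n ih =>
        intro a b hsa hab hbt hba
        set c := max a (b - δ)
        have hac : a ≤ c := le_max_left _ _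
        have hcb : c ≤ b := max_le hab (by linarith)
        have hca : c - a ≤ n * δ := by
          push_cast at hba
          exact sub_le_iff_le_add.mpr (max_le (by nlinarith) (by linarith))
        calc |K b - K a| ≤ |K b - K c| + |K c - K a| := abs_sub_le _ _ _
          _ ≤ ε * (V b - V c) + ε * (V c - V a) :=
            add_le_add (hKV c b (hsa.trans hac) hcb hbt (by linarith [le_max_right a (b - δ)]))
              (ih a c hsa hac (hcb.trans hbt) hca)
          _ = ε * (V b - V a) := by ring
    obtain ⟨n, hn⟩ := Archimedean.arch (t - s) hδ
    exact chain n s t le_rfl hst le_rfl (by simpa using hn)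
  have h_lim : Tendsto (fun ε => ε * (V t - V s)) (𝓝[>] 0) (𝓝 0) :=
    ((continuous_id.mul continuous_const).tendsto' 0 0 (zero_mul _)).mono_left nhdsWithin_le_nhds
  exact sub_eq_zero.mp (abs_nonpos_iff.mp
    (ge_of_tendsto h_lim (eventually_nhdsWithin_of_forall hbound)))

theorem continuousAt_integral_indicator_le {X : Type*} [MeasurableSpace X] {μ : Measure X}
    {τ f : X → ℝ} (hτ : Measurable τ) (hf : Integrable f μ) {u : ℝ}
    (hu : μ (τ ⁻¹' {u}) = 0) :
    ContinuousAt (fun v => ∫ x, {y | τ y ≤ v}.indicator f x ∂μ) u := by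
  refine continuousAt_of_dominated (bound := fun x => ‖f x‖)
    (Eventually.of_forall fun v => hf.aestronglyMeasurable.indicator (hτ measurableSet_Iic))
    (Eventually.of_forall fun v => ae_of_all _ fun x => norm_indicator_le_norm_self _ _)
    hf.norm ?_
  have hτu : ∀ᵐ x ∂μ, τ x ≠ u := measure_eq_zero_iff_ae_notMem.mp hu
  filter_upwards [hτu] with x hx
  rcases hx.lt_or_gt with hlt | hgt
  · refine (continuousAt_const (y := f x)).congr ((eventually_gt_nhds hlt).mono fun v hv => ?_)
    exact (indicator_of_mem (show x ∈ {y | τ y ≤ v} from hv.le) f).symm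
  · refine (continuousAt_const (y := 0)).congr ((eventually_lt_nhds hgt).mono fun v hv => ?_)
    exact (indicator_of_notMem (show x ∉ {y | τ y ≤ v} from not_le.mpr hv) f).symm

theorem integrable_sq_sub_two_mul {X : Type*} [MeasurableSpace X] {μ : Measure X}
    [IsFiniteMeasure μ] {φ g : X → ℝ} (hg : Integrable g μ) (hφ : AEStronglyMeasurable φ μ)
    {M : ℝ} (hφM : ∀ x, |φ x| ≤ M) :
    Integrable (fun x => φ x ^ 2 - 2 * φ x * g x) μ := by
  refine Integrable.sub ((integrable_const (M ^ 2)).mono' (hφ.pow 2) (ae_of_all _ fun x => ?_))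
    (hg.bdd_mul (hφ.const_mul 2) (c := 2 * M) (ae_of_all _ fun x => ?_))
  · rw [norm_pow, Real.norm_eq_abs]
    exact pow_le_pow_left₀ (abs_nonneg _) (hφM x) 2
  · rw [norm_mul, Real.norm_eq_abs, Real.norm_eq_abs, abs_two]
    exact mul_le_mul_of_nonneg_left (hφM x) zero_le_two

theorem exists_ae_restrict_eq_const_of_measurable_trimmedMS {d : ℕ} {μ : Measure (Fin d → ℝ)}
    {Q : Set (Fin d → ℝ)} {α : (Fin d → ℝ) → ℝ} (hα : Measurable[trimmedMS μ Q] α) :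
    ∃ c, α =ᵐ[μ.restrict Q] fun _ => c := by
  refine exists_eventuallyEq_const_of_forall_separating MeasurableSet fun U hU => ?_
  obtain ⟨hαU, hnull | hconull⟩ := hα hU
  · have hU_null : μ.restrict Q (α ⁻¹' U) = 0 := by rwa [Measure.restrict_apply hαU]
    exact Or.inr (measure_eq_zero_iff_ae_notMem.mp hU_null)
  · have hUc_null : μ.restrict Q (α ⁻¹' U)ᶜ = 0 := by
      rwa [Measure.restrict_apply hαU.compl, inter_comm, ← sdiff_eq]
    exact Or.inl (ae_iff.mpr hUc_null)

namespace TrimmedFamily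

variable {d : ℕ} {μ : Measure (Fin d → ℝ)} (T : TrimmedFamily d μ)

theorem measurableSet_D {u : ℝ} (h0 : 0 ≤ u) (h1 : u ≤ 1) : MeasurableSet (T.D u) :=
  (T.isClosed u ⟨h0, h1⟩).measurableSet

theorem measurableSet_Q {u : ℝ} (h0 : 0 ≤ u) (h1 : u ≤ 1) : MeasurableSet (T.Q u) :=
  (T.measurableSet_D h0 h1).compl

theorem measurableSet_D_sdiff_D {a b : ℝ} (ha : 0 ≤ a) (hab : a ≤ b) (hb : b ≤ 1) :
    MeasurableSet (T.D b \ T.D a) :=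
  (T.measurableSet_D (ha.trans hab) hb).diff (T.measurableSet_D ha (hab.trans hb))

theorem Q_subset_Q {a b : ℝ} (ha : 0 ≤ a) (hab : a ≤ b) (hb : b ≤ 1) : T.Q b ⊆ T.Q a :=
  compl_subset_compl.mpr (T.mono a b ha hab hb)

theorem D_sdiff_D_eq_Q_sdiff_Q (a b : ℝ) : T.D b \ T.D a = T.Q a \ T.Q b := by
  ext x
  simp only [Q, Set.mem_sdiff, mem_compl_iff, not_not, and_comm]

theorem tau_le_of_mem {u : ℝ} {x : Fin d → ℝ} (h0 : 0 ≤ u) (h1 : u ≤ 1) (hx : x ∈ T.D u) :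
    T.tau x ≤ u :=
  csInf_le ⟨0, fun _ hv => hv.1.1⟩ ⟨⟨h0, h1⟩, hx⟩

theorem tau_nonneg (x : Fin d → ℝ) : 0 ≤ T.tau x :=
  le_csInf ⟨1, ⟨zero_le_one, le_rfl⟩, T.one_eq_univ ▸ mem_univ x⟩ fun _ hv => hv.1.1

theorem le_tau_of_notMem {u : ℝ} {x : Fin d → ℝ} (h1 : u ≤ 1) (hx : x ∉ T.D u) :
    u ≤ T.tau x :=
  le_csInf ⟨1, ⟨zero_le_one, le_rfl⟩, T.one_eq_univ ▸ mem_univ x⟩ fun v hv =>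
    not_lt.mp fun hvu => hx (T.mono v u hv.1.1 hvu.le h1 hv.2)

theorem tau_mem_Icc {a b : ℝ} {x : Fin d → ℝ} (ha : 0 ≤ a) (hab : a ≤ b) (hb : b ≤ 1)
    (hx : x ∈ T.D b \ T.D a) : T.tau x ∈ Icc a b :=
  ⟨T.le_tau_of_notMem (hab.trans hb) hx.2, T.tau_le_of_mem (ha.trans hab) hb hx.1⟩

theorem setOf_tau_le {u : ℝ} (h0 : 0 ≤ u) (h1 : u < 1) : {x | T.tau x ≤ u} = T.D u := by
  refine Subset.antisymm (fun x hx => ?_) fun x hx => T.tau_le_of_mem h0 h1.le hx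
  rw [T.right_cont u h0 h1, mem_iInter₂]
  intro v hv
  by_contra hxv
  exact (T.le_tau_of_notMem hv.2 hxv).not_gt (lt_of_le_of_lt hx hv.1)

theorem measurable_tau : Measurable T.tau := by
  refine measurable_of_Iic fun u => ?_
  rcases lt_or_ge u 0 with hu0 | hu0
  · convert MeasurableSet.empty
    exact eq_empty_of_forall_notMem fun x hx => (T.tau_nonneg x).not_gt (lt_of_le_of_lt hx hu0)
  rcases lt_or_ge u 1 with hu1 | hu1
  · change MeasurableSet {x | T.tau x ≤ u}
    rw [T.setOf_tau_le hu0 hu1]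
    exact T.measurableSet_D hu0 hu1.le
  · convert MeasurableSet.univ
    exact eq_univ_of_forall fun x => (T.tau_le_of_mem zero_le_one le_rfl
      (T.one_eq_univ ▸ mem_univ x)).trans hu1

theorem measure_tau_eq {u : ℝ} (h0 : 0 ≤ u) (h1 : u < 1) : μ (T.tau ⁻¹' {u}) = 0 := by
  rcases h0.eq_or_lt with rfl | hpos
  · refine measure_mono_null (fun x hx => ?_) T.null_zero
    rw [← T.setOf_tau_le le_rfl h1]
    exact le_of_eq hx
  · refine measure_mono_null (fun x hx => ?_) (T.left_jump_null u hpos h1.le)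
    refine ⟨?_, ?_⟩
    · rw [← T.setOf_tau_le h0 h1]
      exact le_of_eq hx
    · simp only [mem_iUnion, not_exists]
      intro v hv hxv
      exact (T.tau_le_of_mem hv.1 (hv.2.trans h1).le hxv).not_gt (hx ▸ hv.2)

theorem continuousOn_setIntegral_D {f : (Fin d → ℝ) → ℝ} (hf : Integrable f μ) :
    ContinuousOn (fun v => ∫ x in T.D v, f x ∂μ) (Ico 0 1) := by
  have h_eq : ∀ v ∈ Ico (0 : ℝ) 1,
      ∫ x in T.D v, f x ∂μ = ∫ x, {y | T.tau y ≤ v}.indicator f x ∂μ := fun v hv => by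
    rw [T.setOf_tau_le hv.1 hv.2, integral_indicator (T.measurableSet_D hv.1 hv.2.le)]
  intro u hu
  exact (continuousAt_integral_indicator_le T.measurable_tau hf
    (T.measure_tau_eq hu.1 hu.2)).continuousWithinAt.congr h_eq (h_eq u hu)

theorem continuousOn_setIntegral_Q {f : (Fin d → ℝ) → ℝ} (hf : Integrable f μ) :
    ContinuousOn (fun v => ∫ x in T.Q v, f x ∂μ) (Ico 0 1) :=
  (continuousOn_const.sub (T.continuousOn_setIntegral_D hf)).congr fun _ hv =>
    setIntegral_compl (T.measurableSet_D hv.1 hv.2.le) hf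

theorem setIntegral_Q_sub_setIntegral_Q {f : (Fin d → ℝ) → ℝ} (hf : Integrable f μ) {a b : ℝ}
    (ha : 0 ≤ a) (hab : a ≤ b) (hb : b ≤ 1) :
    ∫ x in T.Q a, f x ∂μ - ∫ x in T.Q b, f x ∂μ = ∫ x in T.D b \ T.D a, f x ∂μ := by
  rw [D_sdiff_D_eq_Q_sdiff_Q, setIntegral_sdiff (T.measurableSet_Q (ha.trans hab) hb)
    hf.integrableOn (T.Q_subset_Q ha hab hb)]

theorem muQ_eq_setIntegral_one (u : ℝ) : T.muQ u = ∫ _ in T.Q u, (1 : ℝ) ∂μ := by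
  simp [muQ, measureReal_def]

/-- The function `g_u` of the paper, a version of `E_μ[g | F_u]`. -/
def condExpVersion (g : (Fin d → ℝ) → ℝ) (u : ℝ) (x : Fin d → ℝ) : ℝ :=
  (T.D u).indicator g x + (T.Q u).indicator (fun _ => T.G g u) x

theorem condExpVersion_of_mem (g : (Fin d → ℝ) → ℝ) {u : ℝ} {x : Fin d → ℝ} (hx : x ∈ T.D u) :
    T.condExpVersion g u x = g x := by
  simp [condExpVersion, Q, hx]

section Probability

variable [IsProbabilityMeasure μ]

theorem muQ_sub_muQ {a b : ℝ} (ha : 0 ≤ a) (hab : a ≤ b) (hb : b ≤ 1) :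
    T.muQ a - T.muQ b = μ.real (T.D b \ T.D a) := by
  rw [muQ_eq_setIntegral_one, muQ_eq_setIntegral_one,
    T.setIntegral_Q_sub_setIntegral_Q (integrable_const 1) ha hab hb, setIntegral_const,
    smul_eq_mul, mul_one]

theorem muQ_pos {u : ℝ} (h0 : 0 ≤ u) (h1 : u < 1) : 0 < T.muQ u := by
  refine ENNReal.toReal_pos ?_ (measure_ne_top _ _)
  rw [Q, prob_compl_eq_one_sub (T.measurableSet_D h0 h1.le)]
  exact (tsub_pos_of_lt (T.meas_lt_one u h0 h1)).ne'

theorem continuousOn_muQ : ContinuousOn T.muQ (Ico 0 1) := by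
  simpa only [← muQ_eq_setIntegral_one] using T.continuousOn_setIntegral_Q (integrable_const 1)

theorem continuousOn_G {g : (Fin d → ℝ) → ℝ} (hg : Integrable g μ) :
    ContinuousOn (T.G g) (Ico 0 1) :=
  (T.continuousOn_setIntegral_Q hg).div T.continuousOn_muQ fun _ hu => (T.muQ_pos hu.1 hu.2).ne'

theorem G_mul_muQ (g : (Fin d → ℝ) → ℝ) {u : ℝ} (h0 : 0 ≤ u) (h1 : u < 1) :
    T.G g u * T.muQ u = ∫ x in T.Q u, g x ∂μ :=
  div_mul_cancel₀ _ (T.muQ_pos h0 h1).ne'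

variable {g : (Fin d → ℝ) → ℝ} {a b : ℝ}

theorem setIntegral_D_sdiff_D (hg : Integrable g μ) (ha : 0 ≤ a) (hab : a ≤ b) (hb : b < 1) :
    ∫ x in T.D b \ T.D a, g x ∂μ = T.G g a * T.muQ a - T.G g b * T.muQ b := by
  rw [T.G_mul_muQ g ha (hab.trans_lt hb), T.G_mul_muQ g (ha.trans hab) hb,
    T.setIntegral_Q_sub_setIntegral_Q hg ha hab hb.le]

theorem muQ_mul_G_sq_sub_muQ_mul_G_sq (hg : Integrable g μ) (ha : 0 ≤ a) (hab : a ≤ b)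
    (hb : b < 1) :
    T.muQ b * T.G g b ^ 2 - T.muQ a * T.G g a ^ 2
      = ∫ x in T.D b \ T.D a, (T.G g a ^ 2 - 2 * T.G g a * g x) ∂μ
        + T.muQ b * (T.G g b - T.G g a) ^ 2 := by
  rw [integral_sub (integrable_const _) (hg.integrableOn.const_mul _), setIntegral_const,
    integral_const_mul, T.setIntegral_D_sdiff_D hg ha hab hb, smul_eq_mul,
    ← T.muQ_sub_muQ ha hab hb.le]
  ring

theorem muQ_mul_sq_G_sub_G_le (hg : Integrable g μ) (ha : 0 ≤ a) (hab : a ≤ b) (hb : b < 1)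
    {ε M : ℝ} (hGa : |T.G g a| ≤ M) (hGab : |T.G g b - T.G g a| ≤ ε) :
    T.muQ b * (T.G g b - T.G g a) ^ 2
      ≤ ε * (M * μ.real (T.D b \ T.D a) + ∫ x in T.D b \ T.D a, |g x| ∂μ) := by
  have h_eq : T.muQ b * (T.G g b - T.G g a) ^ 2 = (T.G g b - T.G g a)
      * (T.G g a * μ.real (T.D b \ T.D a) - ∫ x in T.D b \ T.D a, g x ∂μ) := by
    rw [T.setIntegral_D_sdiff_D hg ha hab hb, ← T.muQ_sub_muQ ha hab hb.le]
    ring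
  have h_second : |T.G g a * μ.real (T.D b \ T.D a) - ∫ x in T.D b \ T.D a, g x ∂μ|
      ≤ M * μ.real (T.D b \ T.D a) + ∫ x in T.D b \ T.D a, |g x| ∂μ := by
    refine (abs_sub _ _).trans (add_le_add ?_ abs_integral_le_integral_abs)
    rw [abs_mul, abs_of_nonneg measureReal_nonneg]
    exact mul_le_mul_of_nonneg_right hGa measureReal_nonneg
  rw [h_eq]
  exact (le_abs_self _).trans ((abs_mul _ _).trans_le
    (mul_le_mul hGab h_second (abs_nonneg _) ((abs_nonneg _).trans hGab)))

theorem abs_setIntegral_sub_muQ_mul_G_sq_le (hg : Integrable g μ) {φ : (Fin d → ℝ) → ℝ}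
    (hφ : AEStronglyMeasurable φ μ) (ha : 0 ≤ a) (hab : a ≤ b) (hb : b < 1) {ε M : ℝ}
    (hφM : ∀ x, |φ x| ≤ M) (hφa : ∀ x ∈ T.D b \ T.D a, |φ x - T.G g a| ≤ ε)
    (hGa : |T.G g a| ≤ M) (hGab : |T.G g b - T.G g a| ≤ ε) :
    |∫ x in T.D b \ T.D a, (φ x ^ 2 - 2 * φ x * g x) ∂μ
        - (T.muQ b * T.G g b ^ 2 - T.muQ a * T.G g a ^ 2)|
      ≤ 3 * ε * (M * μ.real (T.D b \ T.D a) + ∫ x in T.D b \ T.D a, |g x| ∂μ) := by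
  rw [T.muQ_mul_G_sq_sub_muQ_mul_G_sq hg ha hab hb]
  have h_sq := T.muQ_mul_sq_G_sub_G_le hg ha hab hb hGa hGab
  set P := T.D b \ T.D a
  set Ga := T.G g a
  have hP : MeasurableSet P := T.measurableSet_D_sdiff_D ha hab hb.le
  have h_pt : ∀ x ∈ P, ‖(φ x ^ 2 - 2 * φ x * g x) - (Ga ^ 2 - 2 * Ga * g x)‖
      ≤ 2 * ε * (M + |g x|) := by
    intro x hx
    have h_sum : |φ x + Ga - 2 * g x| ≤ 2 * (M + |g x|) := by
      have := abs_add_le (φ x) Ga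
      have := abs_sub (φ x + Ga) (2 * g x)
      rw [abs_mul, abs_two] at this
      linarith [hφM x]
    rw [Real.norm_eq_abs, show (φ x ^ 2 - 2 * φ x * g x) - (Ga ^ 2 - 2 * Ga * g x)
      = (φ x - Ga) * (φ x + Ga - 2 * g x) by ring, abs_mul]
    calc |φ x - Ga| * |φ x + Ga - 2 * g x| ≤ ε * (2 * (M + |g x|)) :=
          mul_le_mul (hφa x hx) h_sum (abs_nonneg _) ((abs_nonneg _).trans (hφa x hx))
      _ = 2 * ε * (M + |g x|) := by ring
  have h_integral : |∫ x in P, ((φ x ^ 2 - 2 * φ x * g x) - (Ga ^ 2 - 2 * Ga * g x)) ∂μ|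
      ≤ 2 * ε * (M * μ.real P + ∫ x in P, |g x| ∂μ) := by
    have h_dom : Integrable (fun x => 2 * ε * (M + |g x|)) (μ.restrict P) :=
      ((integrable_const M).add hg.abs).integrableOn.const_mul _
    rw [← Real.norm_eq_abs]
    refine (norm_integral_le_of_norm_le h_dom ((ae_restrict_iff' hP).mpr (ae_of_all _ h_pt))).trans
      (le_of_eq ?_)
    rw [integral_const_mul, integral_add (integrable_const _) hg.abs.integrableOn,
      setIntegral_const, smul_eq_mul, mul_comm (μ.real P)]
  have h_sq_nonneg : 0 ≤ T.muQ b * (T.G g b - Ga) ^ 2 :=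
    mul_nonneg (T.muQ_pos (ha.trans hab) hb).le (sq_nonneg _)
  have h_const_int : Integrable (fun x => Ga ^ 2 - 2 * Ga * g x) (μ.restrict P) :=
    (integrable_const _).sub (hg.integrableOn.const_mul _)
  rw [integral_sub (integrable_sq_sub_two_mul hg hφ hφM).integrableOn h_const_int] at h_integral
  have h_tri := abs_sub
    (∫ x in P, (φ x ^ 2 - 2 * φ x * g x) ∂μ - ∫ x in P, (Ga ^ 2 - 2 * Ga * g x) ∂μ)
    (T.muQ b * (T.G g b - Ga) ^ 2)
  rw [abs_of_nonneg h_sq_nonneg] at h_tri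
  rw [← sub_sub]
  linarith

theorem setIntegral_sq_sub_two_mul_eq (hg : Integrable g μ) {φ : (Fin d → ℝ) → ℝ}
    (hφm : AEStronglyMeasurable φ μ) {s t M : ℝ} (hs : 0 ≤ s) (hst : s ≤ t) (ht : t < 1)
    (hGM : ∀ u ∈ Icc s t, |T.G g u| ≤ M) (hφM : ∀ x, |φ x| ≤ M)
    (hφ : ∀ x ∈ T.D t \ T.D s, φ x = T.G g (T.tau x)) :
    ∫ x in T.D t \ T.D s, (φ x ^ 2 - 2 * φ x * g x) ∂μ
      = T.muQ t * T.G g t ^ 2 - T.muQ s * T.G g s ^ 2 := by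
  have hF := integrable_sq_sub_two_mul hg hφm hφM
  have hG_unif : UniformContinuousOn (T.G g) (Icc s t) :=
    isCompact_Icc.uniformContinuousOn_of_continuous
      ((T.continuousOn_G hg).mono fun u hu => ⟨hs.trans hu.1, hu.2.trans_lt ht⟩)
  have hK := eq_of_forall_abs_sub_le_mul_sub hst
    (K := fun u => -∫ x in T.Q u, (φ x ^ 2 - 2 * φ x * g x) ∂μ - T.muQ u * T.G g u ^ 2)
    (V := fun u => -(M * T.muQ u + ∫ x in T.Q u, |g x| ∂μ)) ?_
  · rw [← T.setIntegral_Q_sub_setIntegral_Q hF hs hst ht.le]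
    linarith
  intro ε hε
  obtain ⟨δ, hδ, hδG⟩ := Metric.uniformContinuousOn_iff_le.mp hG_unif (ε / 3) (by positivity)
  refine ⟨δ, hδ, fun a b hsa hab hbt hba => ?_⟩
  have ha : 0 ≤ a := hs.trans hsa
  have hb : b < 1 := hbt.trans_lt ht
  have haI : a ∈ Icc s t := ⟨hsa, hab.trans hbt⟩
  have hbI : b ∈ Icc s t := ⟨hsa.trans hab, hbt⟩
  have hφa : ∀ x ∈ T.D b \ T.D a, |φ x - T.G g a| ≤ ε / 3 := by
    intro x hx
    have hτ := T.tau_mem_Icc ha hab hb.le hx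
    have hx_st : x ∈ T.D t \ T.D s := sdiff_subset_sdiff (T.mono b t (ha.trans hab) hbt ht.le)
      (T.mono s a hs hsa (hab.trans hb.le)) hx
    rw [hφ x hx_st, ← Real.dist_eq]
    refine hδG _ ⟨hsa.trans hτ.1, hτ.2.trans hbt⟩ a haI ?_
    rw [Real.dist_eq, abs_of_nonneg (sub_nonneg.mpr hτ.1)]
    linarith [hτ.2]
  have hGab : |T.G g b - T.G g a| ≤ ε / 3 := by
    rw [← Real.dist_eq]
    refine hδG b hbI a haI ?_
    rwa [Real.dist_eq, abs_of_nonneg (sub_nonneg.mpr hab)]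
  have h_piece := T.abs_setIntegral_sub_muQ_mul_G_sq_le hg hφm ha hab hb hφM hφa (hGM a haI) hGab
  rw [← T.setIntegral_Q_sub_setIntegral_Q hF ha hab hb.le, ← T.muQ_sub_muQ ha hab hb.le,
    ← T.setIntegral_Q_sub_setIntegral_Q hg.abs ha hab hb.le] at h_piece
  convert h_piece using 2 <;> ring

theorem setIntegral_sq_sub_G_tau (hg : MemLp g 2 μ) {s t : ℝ} (hs : 0 ≤ s) (hst : s ≤ t)
    (ht : t < 1) :
    ∫ x in T.D t \ T.D s, (g x - T.G g (T.tau x)) ^ 2 ∂μ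
      = ∫ x in T.D t \ T.D s, g x ^ 2 ∂μ + (T.muQ t * T.G g t ^ 2 - T.muQ s * T.G g s ^ 2) := by
  have hg₁ : Integrable g μ := hg.integrable one_le_two
  have hG : ContinuousOn (T.G g) (Icc s t) :=
    (T.continuousOn_G hg₁).mono fun u hu => ⟨hs.trans hu.1, hu.2.trans_lt ht⟩
  obtain ⟨M, hM⟩ := isCompact_Icc.exists_bound_of_continuousOn hG
  -- `G ∘ τ` need not be measurable, but it agrees on `D t \ D s` with `Gc ∘ τ`, `Gc` continuous.
  set Gc := IccExtend hst ((Icc s t).domRestrict (T.G g))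
  have hGc : Continuous Gc := hG.domRestrict.Icc_extend'
  have hGcM : ∀ u, |Gc u| ≤ M := fun u => by
    rw [← Real.norm_eq_abs]
    exact hM _ (projIcc s t hst u).2
  have hGc_eq : ∀ x ∈ T.D t \ T.D s, Gc (T.tau x) = T.G g (T.tau x) := fun x hx =>
    IccExtend_of_mem hst _ (T.tau_mem_Icc hs hst ht.le hx)
  have hφm : AEStronglyMeasurable (Gc ∘ T.tau) μ :=
    (hGc.measurable.comp T.measurable_tau).aestronglyMeasurable
  have h_main := T.setIntegral_sq_sub_two_mul_eq hg₁ hφm hs hst ht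
    (fun u hu => by simpa using hM u hu) (fun x => hGcM (T.tau x)) hGc_eq
  rw [← h_main, ← integral_add hg.integrable_sq.integrableOn
    (integrable_sq_sub_two_mul hg₁ hφm (fun x => hGcM (T.tau x))).integrableOn]
  refine setIntegral_congr_fun (T.measurableSet_D_sdiff_D hs hst ht.le) fun x hx => ?_
  simp only [Function.comp, hGc_eq x hx]
  ring

theorem integrable_sq_condExpVersion (hg : MemLp g 2 μ) {u : ℝ} (h0 : 0 ≤ u) (h1 : u ≤ 1) :
    Integrable (fun x => T.condExpVersion g u x ^ 2) μ := by
  refine ((hg.integrable_sq.indicator (T.measurableSet_D h0 h1)).add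
    ((integrable_const (T.G g u ^ 2)).indicator (T.measurableSet_Q h0 h1))).congr
    (ae_of_all _ fun x => ?_)
  by_cases hx : x ∈ T.D u <;> simp [condExpVersion, Q, hx]

theorem integral_sq_condExpVersion (hg : MemLp g 2 μ) {u : ℝ} (h0 : 0 ≤ u) (h1 : u ≤ 1) :
    ∫ x, T.condExpVersion g u x ^ 2 ∂μ = ∫ x in T.D u, g x ^ 2 ∂μ + T.muQ u * T.G g u ^ 2 := by
  have h_split : (fun x => T.condExpVersion g u x ^ 2) = fun x =>
      (T.D u).indicator (fun y => g y ^ 2) x + (T.Q u).indicator (fun _ => T.G g u ^ 2) x := by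
    ext x
    by_cases hx : x ∈ T.D u <;> simp [condExpVersion, Q, hx]
  rw [h_split, integral_add ((hg.integrable_sq.indicator (T.measurableSet_D h0 h1)))
    ((integrable_const _).indicator (T.measurableSet_Q h0 h1)),
    integral_indicator (T.measurableSet_D h0 h1), integral_indicator (T.measurableSet_Q h0 h1),
    setIntegral_const, smul_eq_mul, muQ, measureReal_def]

end Probability

end TrimmedFamily

theorem integral_bracket_increment_general
    {d : ℕ} (μ : Measure (Fin d → ℝ)) [IsProbabilityMeasure μ]
    (T : TrimmedFamily d μ) (g : (Fin d → ℝ) → ℝ)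
    (hg_sq : MemLp g 2 μ)
    (gt : ℝ → (Fin d → ℝ) → ℝ)
    (hgt : ∀ u : ℝ, ∀ x, gt u x = (T.D u).indicator g x + (T.Q u).indicator (fun _ => T.G g u) x)
    (s t : ℝ) (hs : 0 < s) (hst : s < t) (ht : t < 1)
    (α : (Fin d → ℝ) → ℝ)
    (hα_meas : Measurable[trimmedMS μ (T.Q s)] α) :
    ∫ x, α x * ((gt t x) ^ 2 - (gt s x) ^ 2) ∂μ
      = ∫ x in T.D t \ T.D s, α x * (g x - T.G g (T.tau x)) ^ 2 ∂μ := by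
  obtain rfl : gt = T.condExpVersion g := funext₂ hgt
  obtain ⟨c, hc⟩ := exists_ae_restrict_eq_const_of_measurable_trimmedMS hα_meas
  have hs1 : s ≤ 1 := (hst.trans ht).le
  have hDs_sub : T.D s ⊆ T.D t := T.mono s t hs.le hst.le ht.le
  have h_lhs : (fun x => α x * (T.condExpVersion g t x ^ 2 - T.condExpVersion g s x ^ 2))
      =ᵐ[μ] fun x => c * (T.condExpVersion g t x ^ 2 - T.condExpVersion g s x ^ 2) := by
    filter_upwards [(ae_restrict_iff' (T.measurableSet_Q hs.le hs1)).mp hc] with x hx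
    by_cases hxs : x ∈ T.D s
    · rw [T.condExpVersion_of_mem g (hDs_sub hxs), T.condExpVersion_of_mem g hxs, sub_self,
        mul_zero, mul_zero]
    · rw [hx hxs]
  have h_rhs : (fun x => α x * (g x - T.G g (T.tau x)) ^ 2)
      =ᵐ[μ.restrict (T.D t \ T.D s)] fun x => c * (g x - T.G g (T.tau x)) ^ 2 :=
    (ae_restrict_of_ae_restrict_of_subset (fun x hx => hx.2) hc).mono fun x hx => by
      simp only [hx]
  rw [integral_congr_ae h_lhs, integral_congr_ae h_rhs, integral_const_mul, integral_const_mul,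
    integral_sub (T.integrable_sq_condExpVersion hg_sq (hs.trans hst).le ht.le)
      (T.integrable_sq_condExpVersion hg_sq hs.le hs1),
    T.integral_sq_condExpVersion hg_sq (hs.trans hst).le ht.le,
    T.integral_sq_condExpVersion hg_sq hs.le hs1,
    T.setIntegral_sq_sub_G_tau hg_sq hs.le hst.le ht,
    setIntegral_sdiff (T.measurableSet_D hs.le hs1) hg_sq.integrable_sq.integrableOn hDs_sub]
  ring

/-- **Lemma 1.** For `0 < s < t < 1` and every bounded `F_s`-measurable `α`,
`∫ α (g_t² − g_s²) dμ = ∫_{D_t \ D_s} α(x) (g(x) − G_{τ(x)})² μ(dx)`, where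
`g_u = g` on `D_u` and `g_u = G_u` on `Q_u` is a version of `E_μ[g | F_u]`. -/
theorem integral_bracket_increment
    {d : ℕ} (μ : Measure (Fin d → ℝ)) [IsProbabilityMeasure μ]
    (T : TrimmedFamily d μ) (g : (Fin d → ℝ) → ℝ)
    (hg_meas : Measurable g) (hg_nonneg : ∀ x, 0 ≤ g x) (hg_sq : MemLp g 2 μ)
    (gt : ℝ → (Fin d → ℝ) → ℝ)
    (hgt : ∀ u : ℝ, ∀ x, gt u x = (T.D u).indicator g x + (T.Q u).indicator (fun _ => T.G g u) x)
    (s t : ℝ) (hs : 0 < s) (hst : s < t) (ht : t < 1)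
    (α : (Fin d → ℝ) → ℝ) (hα_bdd : ∃ C, ∀ x, |α x| ≤ C)
    (hα_meas : Measurable[trimmedMS μ (T.Q s)] α) :
    ∫ x, α x * ((gt t x) ^ 2 - (gt s x) ^ 2) ∂μ
      = ∫ x in T.D t \ T.D s, α x * (g x - T.G g (T.tau x)) ^ 2 ∂μ :=
  integral_bracket_increment_general μ T g hg_sq gt hgt s t hs hst ht α hα_meas
end
end

section
/- Let μ be a probability measure on ℝ^d and {D_t} a family of trimmed regions for μ, with trimmed σ-algebras F_t. Then: (a) each F_t is a σ-algebra containing all μ-null Borel sets, and F_s ⊆ F_t for s ≤ t; (b) the filtration is right-continuous, i.e. F_t = ⋂_{s>t} F_s for every t ∈ [0,1); and (c) F_0 is μ-degenerate, i.e. every A ∈ F_0 satisfies μ(A) ∈ {0,1}. -/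
open MeasureTheory Set Real Filter

noncomputable section

open Topology

section trimmedMS

variable {d : ℕ} {μ : Measure (Fin d → ℝ)} {Q Q' A : Set (Fin d → ℝ)}

lemma measurableSet_trimmedMS_of_null (hA : MeasurableSet A) (h0 : μ A = 0) :
    MeasurableSet[trimmedMS μ Q] A :=
  ⟨hA, Or.inl (measure_mono_null inter_subset_left h0)⟩

lemma trimmedMS_le_of_subset (hQ : Q' ⊆ Q) : trimmedMS μ Q ≤ trimmedMS μ Q' := by
  rintro A ⟨hA, h | h⟩
  · exact ⟨hA, Or.inl (measure_mono_null (inter_subset_inter_right _ hQ) h)⟩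
  · exact ⟨hA, Or.inr (measure_mono_null (sdiff_subset_sdiff_left hQ) h)⟩

/-- Along an increasing union, once `A ∩ Q n` is non-null for one `n` it stays non-null, so from
then on the second alternative `μ (Q n \ A) = 0` holds. -/
lemma measurableSet_trimmedMS_iUnion {Qs : ℕ → Set (Fin d → ℝ)} (hQs : Monotone Qs)
    (hA : ∀ n, MeasurableSet[trimmedMS μ (Qs n)] A) :
    MeasurableSet[trimmedMS μ (⋃ n, Qs n)] A := by
  refine ⟨(hA 0).1, ?_⟩
  by_cases hnull : ∀ n, μ (A ∩ Qs n) = 0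
  · exact Or.inl (by rw [inter_iUnion]; exact measure_iUnion_null hnull)
  push Not at hnull
  obtain ⟨n₀, hn₀⟩ := hnull
  refine Or.inr ?_
  rw [iUnion_sdiff]
  refine measure_iUnion_null fun n => ?_
  rcases le_total n n₀ with hn | hn
  · exact measure_mono_null (sdiff_subset_sdiff_left (hQs hn)) ((hA n₀).2.resolve_left hn₀)
  · refine (hA n).2.resolve_left fun h0 => hn₀ ?_
    exact measure_mono_null (inter_subset_inter_right _ (hQs hn)) h0

lemma measure_eq_zero_or_one_of_measurableSet_trimmedMS [IsProbabilityMeasure μ]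
    (hQ : μ Qᶜ = 0) (hA : MeasurableSet[trimmedMS μ Q] A) : μ A = 0 ∨ μ A = 1 := by
  have null_of_inter_null : ∀ B, μ (B ∩ Q) = 0 → μ B = 0 := fun B hB =>
    measure_mono_null (fun x hx => (em (x ∈ Q)).imp (fun hxQ => ⟨hx, hxQ⟩) id)
      (measure_union_null hB hQ)
  obtain ⟨hAm, h | h⟩ := hA
  · exact Or.inl (null_of_inter_null A h)
  · rw [← prob_compl_eq_zero_iff hAm]
    exact Or.inr (null_of_inter_null Aᶜ (by rwa [inter_comm, ← sdiff_eq]))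

end trimmedMS

namespace TrimmedFamily

variable {d : ℕ} {μ : Measure (Fin d → ℝ)} (T : TrimmedFamily d μ)

lemma Q_subset_Q_s5 {s t : ℝ} (hs : 0 ≤ s) (hst : s ≤ t) (ht : t ≤ 1) : T.Q t ⊆ T.Q s :=
  compl_subset_compl.mpr (T.mono s t hs hst ht)

lemma D_eq_iInter_of_tendsto {t : ℝ} (ht0 : 0 ≤ t) (ht1 : t < 1) {u : ℕ → ℝ}
    (hu : ∀ n, u n ∈ Ioc t 1) (hlim : Tendsto u atTop (𝓝 t)) :
    T.D t = ⋂ n, T.D (u n) := by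
  refine (subset_iInter fun n => T.mono t (u n) ht0 (hu n).1.le (hu n).2).antisymm ?_
  intro x hx
  rw [T.right_cont t ht0 ht1, mem_iInter₂]
  intro s hs
  obtain ⟨n, hn⟩ := (hlim.eventually (gt_mem_nhds hs.1)).exists
  exact T.mono (u n) s (ht0.trans (hu n).1.le) hn.le hs.2 (mem_iInter.mp hx n)

lemma Q_eq_iUnion_of_tendsto {t : ℝ} (ht0 : 0 ≤ t) (ht1 : t < 1) {u : ℕ → ℝ}
    (hu : ∀ n, u n ∈ Ioc t 1) (hlim : Tendsto u atTop (𝓝 t)) :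
    T.Q t = ⋃ n, T.Q (u n) := by
  rw [Q, T.D_eq_iInter_of_tendsto ht0 ht1 hu hlim, compl_iInter]
  rfl

end TrimmedFamily

/-- Properties of the trimmed filtration `{F_t}`:
(a) each `F_t` contains all `μ`-null Borel sets, and `F_s ⊆ F_t` for `s ≤ t`;
(b) right-continuity: for `t < 1`, `A ∈ F_t` iff `A ∈ F_s` for all `s ∈ (t,1]`;
(c) `F_0` is `μ`-degenerate: every `A ∈ F_0` has `μ A ∈ {0,1}`. -/
theorem trimmed_filtration_properties
    {d : ℕ} (μ : Measure (Fin d → ℝ)) [IsProbabilityMeasure μ]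
    (T : TrimmedFamily d μ) :
    (∀ t ∈ Icc (0:ℝ) 1, ∀ A : Set (Fin d → ℝ), MeasurableSet A → μ A = 0 →
        MeasurableSet[trimmedMS μ (T.Q t)] A)
    ∧ (∀ s t : ℝ, 0 ≤ s → s ≤ t → t ≤ 1 →
        trimmedMS μ (T.Q s) ≤ trimmedMS μ (T.Q t))
    ∧ (∀ t : ℝ, 0 ≤ t → t < 1 → ∀ A : Set (Fin d → ℝ),
        (MeasurableSet[trimmedMS μ (T.Q t)] A ↔
          ∀ s ∈ Ioc t (1:ℝ), MeasurableSet[trimmedMS μ (T.Q s)] A))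
    ∧ (∀ A : Set (Fin d → ℝ), MeasurableSet[trimmedMS μ (T.Q 0)] A → μ A = 0 ∨ μ A = 1) := by
  have hmono : ∀ s t : ℝ, 0 ≤ s → s ≤ t → t ≤ 1 →
      trimmedMS μ (T.Q s) ≤ trimmedMS μ (T.Q t) := fun s t hs hst ht =>
    trimmedMS_le_of_subset (T.Q_subset_Q_s5 hs hst ht)
  have hQ0 : μ (T.Q 0)ᶜ = 0 := by rw [TrimmedFamily.Q, compl_compl]; exact T.null_zero
  refine ⟨fun t _ A hA h0 => measurableSet_trimmedMS_of_null hA h0, hmono, ?_,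
    fun A => measure_eq_zero_or_one_of_measurableSet_trimmedMS hQ0⟩
  intro t ht0 ht1 A
  refine ⟨fun hA s hs => hmono t s ht0 hs.1.le hs.2 A hA, fun hA => ?_⟩
  obtain ⟨u, hu_anti, hu_mem, hu_lim⟩ := exists_seq_strictAnti_tendsto' ht1
  have hu : ∀ n, u n ∈ Ioc t 1 := fun n => Ioo_subset_Ioc_self (hu_mem n)
  rw [T.Q_eq_iUnion_of_tendsto ht0 ht1 hu hu_lim]
  refine measurableSet_trimmedMS_iUnion (fun m n hmn => ?_) (fun n => hA (u n) (hu n))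
  exact T.Q_subset_Q_s5 (ht0.trans (hu n).1.le) (hu_anti.antitone hmn) (hu m).2
end
end

section
/- Let μ be an atomless probability measure on ℝ and {D_t=[a_t,b_t]} an interval family of trimmed regions; for x ≠ a_0 let s(x) denote the endpoint of D_{τ(x)} other than x, and s(a_0)=a_0. Let F̂ be the σ-algebra of Borel sets A with (x ∈ A ⟺ s(x) ∈ A). Then there exists a measurable p: ℝ → [0,1] such that for every f ∈ L₂(ℝ, μ), the L₂-symmetrization f̂ = (E_μ[f² | F̂])^{1/2} satisfies f̂²(x) = p(x) f²(x) + (1−p(x)) f²(s(x)) for μ-a.a. x, and, writing ν_x = p(x) δ_x + (1−p(x)) δ_{s(x)}, one has Ent_μ f² − Ent_μ f̂² = ∫_ℝ Ent_{ν_x}(f²) μ(dx) whenever f² log f² is μ-integrable. -/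
open MeasureTheory Set Real Filter

noncomputable section

/-- The interval trimmed regions: `D_t = [a_t, b_t]` for `t ∈ [0,1)` and `D_1 = ℝ`. -/
def DI (a b : ℝ → ℝ) (t : ℝ) : Set ℝ := if t < 1 then Icc (a t) (b t) else univ

/-- `τ(x) = inf {t ∈ [0,1] : x ∈ D_t}`. -/
def tauI (a b : ℝ → ℝ) (x : ℝ) : ℝ := sInf {t | t ∈ Icc (0:ℝ) 1 ∧ x ∈ DI a b t}

/-- `Q_t = ℝ \ D_t`. -/
def QI (a b : ℝ → ℝ) (t : ℝ) : Set ℝ := (DI a b t)ᶜ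

/-- `μ_t = μ(Q_t)` (as a real number). -/
def muI (μ : Measure ℝ) (a b : ℝ → ℝ) (t : ℝ) : ℝ := (μ (QI a b t)).toReal

/-- `G_t = (1/μ(Q_t)) ∫_{Q_t} g dμ`. -/
def GI (μ : Measure ℝ) (a b : ℝ → ℝ) (g : ℝ → ℝ) (t : ℝ) : ℝ :=
  (∫ y in QI a b t, g y ∂μ) / muI μ a b t

/-- The reflection map: for `x ≠ a_0`, `s(x)` is the endpoint of `D_{τ(x)} = [a_{τ(x)}, b_{τ(x)}]`
other than `x`, and `s(a_0) = a_0`. -/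
def reflI (a b : ℝ → ℝ) (x : ℝ) : ℝ :=
  if x < a 0 then b (tauI a b x) else if a 0 < x then a (tauI a b x) else a 0

/-- The symmetric σ-algebra `F̂`: Borel sets `A` such that `x ∈ A ↔ s(x) ∈ A`. -/
def symmMS (s : ℝ → ℝ) : MeasurableSpace ℝ where
  MeasurableSet' A := MeasurableSet A ∧ ∀ x, x ∈ A ↔ s x ∈ A
  measurableSet_empty := ⟨MeasurableSet.empty, fun _ => Iff.rfl⟩
  measurableSet_compl := by
    rintro A ⟨hA, h⟩
    exact ⟨hA.compl, fun x => by simp only [Set.mem_compl_iff]; exact not_congr (h x)⟩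
  measurableSet_iUnion := by
    intro g hg
    refine ⟨MeasurableSet.iUnion fun i => (hg i).1, fun x => ?_⟩
    simp only [Set.mem_iUnion]
    exact exists_congr fun i => (hg i).2 x

/-!
Put `ν = μ + s_* μ`, which is `s`-invariant because `s` is an involution, and `p = dμ/dν`. Then
`p + p ∘ s = 1` `ν`-a.e., so `(1 - p) μ = (p · p ∘ s) ν` is again `s`-invariant. Hence
`(1 - p) · g ∘ s` and `(1 - p) · g` have the same integral over every `s`-invariant set, and
`p g + (1 - p) g ∘ s`, which is a.e. equal to the `s`-invariant `p g + (p g) ∘ s`, is `E[g | F̂]`.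
Integrating the two-point entropies gives the entropy identity; Jensen for `t log t` provides the
integrability. For trimmed intervals, `τ(a_t) = τ(b_t) = t`, and by the intermediate value theorem
every point is some `a_t` or `b_t`; so `s` swaps `a_t` and `b_t` and is an antitone, hence
measurable, involution.
-/

open scoped ENNReal NNReal
open Function Topology

section TrimmedRegions

variable {a b : ℝ → ℝ}

lemma exists_mem_Ico_eq_of_tendsto_atTop {f : ℝ → ℝ} (hf : ContinuousOn f (Ico 0 1))
    (hlim : Tendsto f (𝓝[<] 1) atTop) {x : ℝ} (hx : f 0 ≤ x) : ∃ t ∈ Ico (0:ℝ) 1, f t = x := by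
  obtain ⟨u, hxu, hu⟩ :=
    ((hlim.eventually (eventually_ge_atTop x)).and (Ico_mem_nhdsLT zero_lt_one)).exists
  obtain ⟨t, ht, hft⟩ :=
    intermediate_value_Icc hu.1 (hf.mono (Icc_subset_Ico_right hu.2)) ⟨hx, hxu⟩
  exact ⟨t, ⟨ht.1, ht.2.trans_lt hu.2⟩, hft⟩

lemma tauI_eq_of_isLeast {x t : ℝ} (ht : t ∈ Ico (0:ℝ) 1) (hx : x ∈ Icc (a t) (b t))
    (hmin : ∀ u ∈ Ico 0 t, x ∉ Icc (a u) (b u)) : tauI a b x = t := by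
  refine IsLeast.csInf_eq ⟨⟨⟨ht.1, ht.2.le⟩, by rwa [DI, if_pos ht.2]⟩, ?_⟩
  rintro u ⟨hu, hxu⟩
  by_contra! hut
  rw [DI, if_pos (hut.trans ht.2)] at hxu
  exact hmin u ⟨hu.1, hut⟩ hxu

lemma exists_right_endpoint_eq (hab0 : a 0 = b 0) (hb_cont : ContinuousOn b (Ico (0:ℝ) 1))
    (hb_lim : Tendsto b (𝓝[<] 1) atTop) {x : ℝ} (hx : a 0 ≤ x) :
    ∃ t ∈ Ico (0:ℝ) 1, b t = x :=
  exists_mem_Ico_eq_of_tendsto_atTop hb_cont hb_lim (hab0 ▸ hx)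

lemma exists_left_endpoint_eq (ha_cont : ContinuousOn a (Ico (0:ℝ) 1))
    (ha_lim : Tendsto a (𝓝[<] 1) atBot) {x : ℝ} (hx : x ≤ a 0) :
    ∃ t ∈ Ico (0:ℝ) 1, a t = x := by
  obtain ⟨t, ht, hat⟩ := exists_mem_Ico_eq_of_tendsto_atTop ha_cont.neg
    (tendsto_neg_atBot_atTop.comp ha_lim) (neg_le_neg hx)
  exact ⟨t, ht, neg_injective hat⟩

variable (hab0 : a 0 = b 0) (ha_anti : StrictAntiOn a (Ico (0:ℝ) 1))
  (hb_mono : StrictMonoOn b (Ico (0:ℝ) 1))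
include hab0 ha_anti hb_mono

lemma a_le_b_of_mem_Ico {t : ℝ} (ht : t ∈ Ico (0:ℝ) 1) : a t ≤ b t :=
  (ha_anti.antitoneOn (left_mem_Ico.2 one_pos) ht ht.1).trans
    (hab0.trans_le (hb_mono.monotoneOn (left_mem_Ico.2 one_pos) ht ht.1))

lemma tauI_right_endpoint {t : ℝ} (ht : t ∈ Ico (0:ℝ) 1) : tauI a b (b t) = t :=
  tauI_eq_of_isLeast ht ⟨a_le_b_of_mem_Ico hab0 ha_anti hb_mono ht, le_rfl⟩ fun _ hu hmem =>
    (hb_mono ⟨hu.1, hu.2.trans ht.2⟩ ht hu.2).not_ge hmem.2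

lemma tauI_left_endpoint {t : ℝ} (ht : t ∈ Ico (0:ℝ) 1) : tauI a b (a t) = t :=
  tauI_eq_of_isLeast ht ⟨le_rfl, a_le_b_of_mem_Ico hab0 ha_anti hb_mono ht⟩ fun _ hu hmem =>
    (ha_anti ⟨hu.1, hu.2.trans ht.2⟩ ht hu.2).not_ge hmem.1

lemma reflI_right_endpoint {t : ℝ} (ht : t ∈ Ico (0:ℝ) 1) : reflI a b (b t) = a t := by
  rcases ht.1.eq_or_lt with rfl | ht0
  · simp [reflI, ← hab0]
  · have hbt : a 0 < b t := hab0 ▸ hb_mono (left_mem_Ico.2 one_pos) ht ht0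
    rw [reflI, if_neg hbt.not_gt, if_pos hbt, tauI_right_endpoint hab0 ha_anti hb_mono ht]

lemma reflI_left_endpoint {t : ℝ} (ht : t ∈ Ico (0:ℝ) 1) : reflI a b (a t) = b t := by
  rcases ht.1.eq_or_lt with rfl | ht0
  · simp [reflI, hab0]
  · rw [reflI, if_pos (ha_anti (left_mem_Ico.2 one_pos) ht ht0),
      tauI_left_endpoint hab0 ha_anti hb_mono ht]

variable (ha_cont : ContinuousOn a (Ico (0:ℝ) 1)) (hb_cont : ContinuousOn b (Ico (0:ℝ) 1))
  (ha_lim : Tendsto a (𝓝[<] 1) atBot) (hb_lim : Tendsto b (𝓝[<] 1) atTop)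
include ha_cont hb_cont ha_lim hb_lim

lemma reflI_involutive : Involutive (reflI a b) := by
  intro x
  rcases le_total x (a 0) with hx | hx
  · obtain ⟨t, ht, rfl⟩ := exists_left_endpoint_eq ha_cont ha_lim hx
    rw [reflI_left_endpoint hab0 ha_anti hb_mono ht, reflI_right_endpoint hab0 ha_anti hb_mono ht]
  · obtain ⟨t, ht, rfl⟩ := exists_right_endpoint_eq hab0 hb_cont hb_lim hx
    rw [reflI_right_endpoint hab0 ha_anti hb_mono ht, reflI_left_endpoint hab0 ha_anti hb_mono ht]

lemma reflI_antitone : Antitone (reflI a b) := by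
  intro x y hxy
  rcases le_total x (a 0) with hx | hx
  · obtain ⟨t, ht, rfl⟩ := exists_left_endpoint_eq ha_cont ha_lim hx
    rw [reflI_left_endpoint hab0 ha_anti hb_mono ht]
    rcases le_total y (a 0) with hy | hy
    · obtain ⟨u, hu, rfl⟩ := exists_left_endpoint_eq ha_cont ha_lim hy
      rw [reflI_left_endpoint hab0 ha_anti hb_mono hu]
      exact hb_mono.monotoneOn hu ht ((ha_anti.le_iff_ge ht hu).1 hxy)
    · obtain ⟨u, hu, rfl⟩ := exists_right_endpoint_eq hab0 hb_cont hb_lim hy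
      rw [reflI_right_endpoint hab0 ha_anti hb_mono hu]
      exact (ha_anti.antitoneOn (left_mem_Ico.2 one_pos) hu hu.1).trans
        (hab0.trans_le (hb_mono.monotoneOn (left_mem_Ico.2 one_pos) ht ht.1))
  · obtain ⟨t, ht, rfl⟩ := exists_right_endpoint_eq hab0 hb_cont hb_lim hx
    obtain ⟨u, hu, rfl⟩ := exists_right_endpoint_eq hab0 hb_cont hb_lim (hx.trans hxy)
    rw [reflI_right_endpoint hab0 ha_anti hb_mono ht, reflI_right_endpoint hab0 ha_anti hb_mono hu]
    exact ha_anti.antitoneOn ht hu ((hb_mono.le_iff_le ht hu).1 hxy)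

end TrimmedRegions

section Symmetrization

variable {α : Type*} [MeasurableSpace α] {μ ν : Measure α} {s : α → α}

lemma MeasureTheory.MeasurePreserving.withDensity_of_comp_eq (hs : MeasurePreserving s ν ν)
    {H : α → ℝ≥0∞} (hH : Measurable H) (hHs : ∀ x, H (s x) = H x) :
    MeasurePreserving s (ν.withDensity H) (ν.withDensity H) := by
  refine ⟨hs.measurable, Measure.ext fun A hA => ?_⟩
  rw [Measure.map_apply hs.measurable hA, withDensity_apply _ (hs.measurable hA),
    withDensity_apply _ hA]
  conv_rhs => rw [← hs.map_eq, setLIntegral_map hA hH hs.measurable]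
  simp only [hHs]

lemma measurePreserving_add_map_self (hs : Measurable s) (hss : Involutive s) :
    MeasurePreserving s (μ + μ.map s) (μ + μ.map s) := by
  refine ⟨hs, ?_⟩
  rw [Measure.map_add _ _ hs, Measure.map_map hs hs, hss.comp_self, Measure.map_id, add_comm]

lemma rnDeriv_add_rnDeriv_comp_ae_eq_one [IsFiniteMeasure μ] (hs : Measurable s)
    (hss : Involutive s) :
    ∀ᵐ x ∂(μ + μ.map s),
      μ.rnDeriv (μ + μ.map s) x + μ.rnDeriv (μ + μ.map s) (s x) = 1 := by
  have hcomp : (fun x => ((μ.map s).map s).rnDeriv ((μ + μ.map s).map s) (s x))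
      =ᵐ[μ + μ.map s] (μ.map s).rnDeriv (μ + μ.map s) :=
    (MeasurableEquiv.ofInvolutive s hss hs).measurableEmbedding.rnDeriv_map _ _
  rw [Measure.map_map hs hs, hss.comp_self, Measure.map_id,
    (measurePreserving_add_map_self hs hss).map_eq] at hcomp
  filter_upwards [hcomp, Measure.rnDeriv_add μ (μ.map s) (μ + μ.map s),
    Measure.rnDeriv_self (μ + μ.map s)] with x hx hadd hself
  rw [hx, ← Pi.add_apply, ← hadd, hself]

/-- The density `dμ / d(μ + s_* μ)`, truncated at `1` so that it lies in `[0, 1]` everywhere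
rather than only almost everywhere. -/
def symmWeight (μ : Measure α) (s : α → α) (x : α) : ℝ :=
  min ((μ.rnDeriv (μ + μ.map s)) x).toReal 1

lemma measurable_symmWeight (μ : Measure α) (s : α → α) : Measurable (symmWeight μ s) :=
  (Measure.measurable_rnDeriv _ _).ennreal_toReal.min measurable_const

lemma symmWeight_mem_Icc (μ : Measure α) (s : α → α) (x : α) : symmWeight μ s x ∈ Icc 0 1 :=
  ⟨le_min ENNReal.toReal_nonneg zero_le_one, min_le_right _ _⟩

lemma ofReal_one_sub_symmWeight_ae_eq [IsFiniteMeasure μ] (hs : Measurable s)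
    (hss : Involutive s) :
    ∀ᵐ x ∂μ, ENNReal.ofReal (1 - symmWeight μ s x) = μ.rnDeriv (μ + μ.map s) (s x) := by
  have hμν : μ ≪ μ + μ.map s := Measure.AbsolutelyContinuous.rfl.add_right _
  filter_upwards [hμν.ae_le (rnDeriv_add_rnDeriv_comp_ae_eq_one hs hss)] with x hx
  set ρ := μ.rnDeriv (μ + μ.map s)
  have hρx : ρ x ≠ ∞ := ne_top_of_le_ne_top ENNReal.one_ne_top (hx ▸ le_self_add)
  have hρsx : ρ (s x) ≠ ∞ := ne_top_of_le_ne_top ENNReal.one_ne_top (hx ▸ le_add_self)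
  have hsum : (ρ x).toReal + (ρ (s x)).toReal = 1 := by
    rw [← ENNReal.toReal_add hρx hρsx, hx, ENNReal.toReal_one]
  rw [symmWeight, min_eq_left (by linarith [(ρ (s x)).toReal_nonneg]), ← hsum,
    add_sub_cancel_left, ENNReal.ofReal_toReal hρsx]

lemma symmWeight_comp_ae_eq [IsFiniteMeasure μ] (hs : Measurable s) (hss : Involutive s) :
    ∀ᵐ x ∂μ, symmWeight μ s (s x) = 1 - symmWeight μ s x := by
  filter_upwards [ofReal_one_sub_symmWeight_ae_eq hs hss] with x hx
  have hp := symmWeight_mem_Icc μ s x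
  rw [symmWeight, ← hx, ENNReal.toReal_ofReal (sub_nonneg.2 hp.2), min_eq_left (by linarith [hp.1])]

lemma measurePreserving_withDensity_one_sub_symmWeight [IsFiniteMeasure μ] (hs : Measurable s)
    (hss : Involutive s) :
    MeasurePreserving s (μ.withDensity fun x => ENNReal.ofReal (1 - symmWeight μ s x))
      (μ.withDensity fun x => ENNReal.ofReal (1 - symmWeight μ s x)) := by
  set ρ := μ.rnDeriv (μ + μ.map s)
  have hρ : Measurable ρ := Measure.measurable_rnDeriv _ _
  have hdensity : μ.withDensity (fun x => ENNReal.ofReal (1 - symmWeight μ s x))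
      = (μ + μ.map s).withDensity (ρ * (ρ ∘ s)) := calc
    _ = μ.withDensity (ρ ∘ s) :=
      withDensity_congr_ae (ofReal_one_sub_symmWeight_ae_eq hs hss)
    _ = ((μ + μ.map s).withDensity ρ).withDensity (ρ ∘ s) := by
      rw [Measure.withDensity_rnDeriv_eq _ _ (Measure.AbsolutelyContinuous.rfl.add_right _)]
    _ = _ := (withDensity_mul _ hρ (hρ.comp hs)).symm
  rw [hdensity]
  exact (measurePreserving_add_map_self hs hss).withDensity_of_comp_eq (hρ.mul (hρ.comp hs))
    fun x => by simp only [Pi.mul_apply, comp_apply, hss x, mul_comm]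

section WeightedTransfer

variable {q : α → ℝ} (hq : Measurable q) (hq0 : ∀ x, 0 ≤ q x)
include hq hq0

lemma integral_withDensity_ofReal (h : α → ℝ) :
    ∫ x, h x ∂μ.withDensity (fun x => ENNReal.ofReal (q x)) = ∫ x, q x * h x ∂μ := by
  rw [show (fun x => ENNReal.ofReal (q x)) = fun x => ((q x).toNNReal : ℝ≥0∞) from rfl,
    integral_withDensity_eq_integral_smul hq.real_toNNReal]
  simp only [NNReal.smul_def, Real.coe_toNNReal _ (hq0 _), smul_eq_mul]

lemma integrable_withDensity_ofReal_iff {h : α → ℝ} :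
    Integrable h (μ.withDensity fun x => ENNReal.ofReal (q x)) ↔
      Integrable (fun x => q x * h x) μ := by
  rw [show (fun x => ENNReal.ofReal (q x)) = fun x => ((q x).toNNReal : ℝ≥0∞) from rfl,
    integrable_withDensity_iff_integrable_smul hq.real_toNNReal]
  simp only [NNReal.smul_def, Real.coe_toNNReal _ (hq0 _), smul_eq_mul]

variable (hsq : MeasurePreserving s (μ.withDensity fun x => ENNReal.ofReal (q x))
  (μ.withDensity fun x => ENNReal.ofReal (q x)))
include hsq

lemma integrable_mul_comp_of_measurePreserving {h : α → ℝ}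
    (hh : Integrable (fun x => q x * h x) μ) : Integrable (fun x => q x * h (s x)) μ := by
  rw [← integrable_withDensity_ofReal_iff hq hq0] at hh ⊢
  exact (hsq.integrable_comp hh.1).2 hh

lemma integral_mul_comp_of_measurePreserving (hse : MeasurableEmbedding s) (h : α → ℝ) :
    ∫ x, q x * h (s x) ∂μ = ∫ x, q x * h x ∂μ := by
  rw [← integral_withDensity_ofReal hq hq0, ← integral_withDensity_ofReal hq hq0]
  exact hsq.integral_comp hse h

lemma mul_comp_ae_eq_of_measurePreserving {h h' : α → ℝ} (hh : h =ᵐ[μ] h') :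
    (fun x => q x * h (s x)) =ᵐ[μ] fun x => q x * h' (s x) := by
  have hcomp : h ∘ s =ᵐ[μ.withDensity fun x => ENNReal.ofReal (q x)] h' ∘ s :=
    hsq.quasiMeasurePreserving.ae_eq_comp (withDensity_absolutelyContinuous _ _ hh)
  filter_upwards [(ae_withDensity_iff hq.ennreal_ofReal).1 hcomp] with x hx
  rcases (hq0 x).eq_or_lt with hqx | hqx
  · simp [← hqx]
  · exact congrArg (q x * ·) (hx (ENNReal.ofReal_pos.2 hqx).ne')

end WeightedTransfer

def symmAverage (μ : Measure α) (s : α → α) (g : α → ℝ) (x : α) : ℝ :=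
  symmWeight μ s x * g x + (1 - symmWeight μ s x) * g (s x)

section symmAverage

variable {g : α → ℝ}

lemma integrable_symmWeight_mul (hg : Integrable g μ) :
    Integrable (fun x => symmWeight μ s x * g x) μ :=
  hg.bdd_mul (measurable_symmWeight μ s).aestronglyMeasurable (c := 1) <| .of_forall fun x => by
    rw [Real.norm_of_nonneg (symmWeight_mem_Icc μ s x).1]; exact (symmWeight_mem_Icc μ s x).2

lemma integrable_one_sub_symmWeight_mul (hg : Integrable g μ) :
    Integrable (fun x => (1 - symmWeight μ s x) * g x) μ :=
  (hg.sub (integrable_symmWeight_mul hg)).congr <| .of_forall fun x => by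
    simp only [Pi.sub_apply]; ring

lemma indicator_symmAverage {A : Set α} (hA : ∀ x, x ∈ A ↔ s x ∈ A) (g : α → ℝ) :
    A.indicator (symmAverage μ s g) = symmAverage μ s (A.indicator g) := by
  ext x
  by_cases hx : x ∈ A
  · simp [symmAverage, hx, (hA x).1 hx]
  · simp [symmAverage, hx, mt (hA x).2 hx]

variable [IsFiniteMeasure μ] (hs : Measurable s) (hss : Involutive s)
include hs hss

lemma integrable_one_sub_symmWeight_mul_comp (hg : Integrable g μ) :
    Integrable (fun x => (1 - symmWeight μ s x) * g (s x)) μ :=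
  integrable_mul_comp_of_measurePreserving ((measurable_symmWeight μ s).const_sub 1)
    (fun x => sub_nonneg.2 (symmWeight_mem_Icc μ s x).2)
    (measurePreserving_withDensity_one_sub_symmWeight hs hss)
    (integrable_one_sub_symmWeight_mul hg)

lemma integral_one_sub_symmWeight_mul_comp (g : α → ℝ) :
    ∫ x, (1 - symmWeight μ s x) * g (s x) ∂μ = ∫ x, (1 - symmWeight μ s x) * g x ∂μ :=
  integral_mul_comp_of_measurePreserving ((measurable_symmWeight μ s).const_sub 1)
    (fun x => sub_nonneg.2 (symmWeight_mem_Icc μ s x).2)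
    (measurePreserving_withDensity_one_sub_symmWeight hs hss)
    (MeasurableEquiv.ofInvolutive s hss hs).measurableEmbedding g

lemma integrable_symmAverage (hg : Integrable g μ) : Integrable (symmAverage μ s g) μ :=
  (integrable_symmWeight_mul hg).add (integrable_one_sub_symmWeight_mul_comp hs hss hg)

lemma integral_symmAverage (hg : Integrable g μ) :
    ∫ x, symmAverage μ s g x ∂μ = ∫ x, g x ∂μ := by
  unfold symmAverage
  rw [integral_add (integrable_symmWeight_mul hg)
    (integrable_one_sub_symmWeight_mul_comp hs hss hg), integral_one_sub_symmWeight_mul_comp hs hss,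
    ← integral_add (integrable_symmWeight_mul hg) (integrable_one_sub_symmWeight_mul hg)]
  congr 1 with x
  ring

lemma symmAverage_congr_ae {g' : α → ℝ} (hg : g =ᵐ[μ] g') :
    symmAverage μ s g =ᵐ[μ] symmAverage μ s g' := by
  filter_upwards [hg, mul_comp_ae_eq_of_measurePreserving
    ((measurable_symmWeight μ s).const_sub 1)
    (fun x => sub_nonneg.2 (symmWeight_mem_Icc μ s x).2)
    (measurePreserving_withDensity_one_sub_symmWeight hs hss) hg] with x hx hxs
  simp only [symmAverage, hx, hxs]

end symmAverage

end Symmetrization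

section Entropy

variable {α : Type*} [MeasurableSpace α]

lemma integral_add_smul_dirac [MeasurableSingletonClass α] {c d : ℝ} (hc : 0 ≤ c) (hd : 0 ≤ d)
    (x y : α) (h : α → ℝ) :
    ∫ z, h z ∂(ENNReal.ofReal c • Measure.dirac x + ENNReal.ofReal d • Measure.dirac y)
      = c * h x + d * h y := by
  have hint : ∀ z r, Integrable h (ENNReal.ofReal r • Measure.dirac z) := fun _ _ =>
    (integrable_dirac enorm_lt_top).smul_measure ENNReal.ofReal_ne_top
  rw [integral_add_measure (hint _ _) (hint _ _), integral_smul_measure, integral_smul_measure,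
    integral_dirac, integral_dirac, ENNReal.toReal_ofReal hc, ENNReal.toReal_ofReal hd,
    smul_eq_mul, smul_eq_mul]

lemma entropy_add_smul_dirac [MeasurableSingletonClass α] {c d : ℝ} (hc : 0 ≤ c) (hd : 0 ≤ d)
    (x y : α) (h : α → ℝ) :
    entropy (ENNReal.ofReal c • Measure.dirac x + ENNReal.ofReal d • Measure.dirac y) h
      = c * (h x * log (h x)) + d * (h y * log (h y))
        - (c * h x + d * h y) * log (c * h x + d * h y) := by
  rw [entropy, integral_add_smul_dirac hc hd, integral_add_smul_dirac hc hd]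

lemma integrable_mul_log_of_mul_log_le {μ : Measure α} [IsFiniteMeasure μ] {u v : α → ℝ}
    (hu : AEStronglyMeasurable u μ) (hu0 : ∀ᵐ x ∂μ, 0 ≤ u x) (hv : Integrable v μ)
    (huv : ∀ᵐ x ∂μ, u x * log (u x) ≤ v x) :
    Integrable (fun x => u x * log (u x)) μ := by
  refine (hv.abs.add (integrable_const 1)).mono'
    (Real.continuous_mul_log.comp_aestronglyMeasurable hu) ?_
  filter_upwards [hu0, huv] with x hx0 hxv
  rw [Pi.add_apply, Real.norm_eq_abs, abs_le]
  have := Real.self_sub_one_le_mul_log hx0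
  constructor <;> linarith [le_abs_self (v x), abs_nonneg (v x)]

end Entropy

section SymmetricSigmaAlgebra

variable {μ : Measure ℝ} [IsFiniteMeasure μ] {s : ℝ → ℝ}

lemma symmMS_le (s : ℝ → ℝ) : symmMS s ≤ (inferInstance : MeasurableSpace ℝ) :=
  fun _ hA => hA.1

lemma measurable_symmMS_of_comp_eq {h : ℝ → ℝ} (hh : Measurable h) (hhs : ∀ x, h (s x) = h x) :
    Measurable[symmMS s] h :=
  fun _ hB => ⟨hh hB, fun x => by simp only [mem_preimage, hhs x]⟩

variable (hs : Measurable s) (hss : Involutive s)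
include hs hss

lemma aestronglyMeasurable_symmMS_symmAverage {g : ℝ → ℝ} (hg : Measurable g) :
    AEStronglyMeasurable[symmMS s] (symmAverage μ s g) μ := by
  have hw := measurable_symmWeight μ s
  have hsymm : Measurable[symmMS s]
      fun x => symmWeight μ s x * g x + symmWeight μ s (s x) * g (s x) :=
    measurable_symmMS_of_comp_eq (by fun_prop) fun x => by simp only [hss x]; ring
  refine ⟨_, hsymm.stronglyMeasurable, ?_⟩
  filter_upwards [symmWeight_comp_ae_eq hs hss] with x hx
  simp only [symmAverage, hx]

lemma setIntegral_symmAverage {g : ℝ → ℝ} (hg : Integrable g μ) {A : Set ℝ}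
    (hA : MeasurableSet[symmMS s] A) :
    ∫ x in A, symmAverage μ s g x ∂μ = ∫ x in A, g x ∂μ := by
  rw [← integral_indicator hA.1, ← integral_indicator hA.1, indicator_symmAverage hA.2,
    integral_symmAverage hs hss (hg.indicator hA.1)]

theorem condExp_symmMS_ae_eq_symmAverage {g : ℝ → ℝ} (hg : Integrable g μ) :
    μ[g|symmMS s] =ᵐ[μ] symmAverage μ s g := by
  have hmk := hg.1.ae_eq_mk
  have hg' := hg.congr hmk
  refine (condExp_congr_ae hmk).trans <| .trans ?_ (symmAverage_congr_ae hs hss hmk.symm)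
  exact (ae_eq_condExp_of_forall_setIntegral_eq (symmMS_le s) hg'
    (fun _ _ _ => (integrable_symmAverage hs hss hg').integrableOn)
    (fun _ hA _ => setIntegral_symmAverage hs hss hg' hA)
    (aestronglyMeasurable_symmMS_symmAverage hs hss hg.1.stronglyMeasurable_mk.measurable)).symm

theorem entropy_sub_entropy_condExp_symmMS {g : ℝ → ℝ}
    (hg : Integrable g μ) (hg0 : ∀ x, 0 ≤ g x) (hglog : Integrable (fun x => g x * log (g x)) μ) :
    entropy μ g - entropy μ (μ[g|symmMS s]) = ∫ x, entropy
      (ENNReal.ofReal (symmWeight μ s x) • Measure.dirac x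
        + ENNReal.ofReal (1 - symmWeight μ s x) • Measure.dirac (s x)) g ∂μ := by
  have hp x := symmWeight_mem_Icc μ s x
  have hcond := condExp_symmMS_ae_eq_symmAverage hs hss hg
  have hjensen x : symmAverage μ s g x * log (symmAverage μ s g x)
      ≤ symmAverage μ s (fun y => g y * log (g y)) x := by
    have h := Real.convexOn_mul_log.2 (hg0 x) (hg0 (s x)) (hp x).1 (sub_nonneg.2 (hp x).2)
      (add_sub_cancel _ _)
    simp only [smul_eq_mul] at h
    exact h
  have hint : Integrable (fun x => symmAverage μ s g x * log (symmAverage μ s g x)) μ :=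
    integrable_mul_log_of_mul_log_le
      ((stronglyMeasurable_condExp.mono (symmMS_le s)).aestronglyMeasurable.congr hcond)
      (.of_forall fun x => add_nonneg (mul_nonneg (hp x).1 (hg0 x))
        (mul_nonneg (sub_nonneg.2 (hp x).2) (hg0 (s x))))
      (integrable_symmAverage hs hss hglog) (.of_forall hjensen)
  have htwo x : entropy (ENNReal.ofReal (symmWeight μ s x) • Measure.dirac x
      + ENNReal.ofReal (1 - symmWeight μ s x) • Measure.dirac (s x)) g
      = symmAverage μ s (fun y => g y * log (g y)) x
        - symmAverage μ s g x * log (symmAverage μ s g x) :=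
    entropy_add_smul_dirac (hp x).1 (sub_nonneg.2 (hp x).2) x (s x) g
  have hlog_cond : ∫ x, μ[g|symmMS s] x * log (μ[g|symmMS s] x) ∂μ
      = ∫ x, symmAverage μ s g x * log (symmAverage μ s g x) ∂μ :=
    integral_congr_ae (hcond.mono fun x hx => congrArg (fun t => t * log t) hx)
  simp only [htwo]
  rw [integral_sub (integrable_symmAverage hs hss hglog) hint, integral_symmAverage hs hss hglog,
    entropy, entropy, integral_condExp (symmMS_le s), hlog_cond]
  ring

end SymmetricSigmaAlgebra

theorem symmetrization_entropy_decomposition_general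
    (μ : Measure ℝ) [IsProbabilityMeasure μ]
    (a b : ℝ → ℝ) (hab0 : a 0 = b 0)
    (ha_cont : ContinuousOn a (Ico (0:ℝ) 1)) (hb_cont : ContinuousOn b (Ico (0:ℝ) 1))
    (ha_anti : StrictAntiOn a (Ico (0:ℝ) 1)) (hb_mono : StrictMonoOn b (Ico (0:ℝ) 1))
    (ha_lim : Tendsto a (nhdsWithin 1 (Iio 1)) atBot)
    (hb_lim : Tendsto b (nhdsWithin 1 (Iio 1)) atTop) :
    ∃ p : ℝ → ℝ, Measurable p ∧ (∀ x, p x ∈ Icc (0:ℝ) 1) ∧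
      ∀ f : ℝ → ℝ, MemLp f 2 μ →
        ((μ[(fun y => f y ^ 2)|symmMS (reflI a b)])
            =ᵐ[μ] fun x => p x * f x ^ 2 + (1 - p x) * f (reflI a b x) ^ 2)
        ∧ (Integrable (fun x => f x ^ 2 * Real.log (f x ^ 2)) μ →
            entropy μ (fun x => f x ^ 2)
                - entropy μ (μ[(fun y => f y ^ 2)|symmMS (reflI a b)])
              = ∫ x, entropy
                  (ENNReal.ofReal (p x) • Measure.dirac x
                    + ENNReal.ofReal (1 - p x) • Measure.dirac (reflI a b x))
                  (fun y => f y ^ 2) ∂μ) := by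
  have hs : Measurable (reflI a b) :=
    (reflI_antitone hab0 ha_anti hb_mono ha_cont hb_cont ha_lim hb_lim).measurable
  have hss := reflI_involutive hab0 ha_anti hb_mono ha_cont hb_cont ha_lim hb_lim
  exact ⟨symmWeight μ (reflI a b), measurable_symmWeight _ _, symmWeight_mem_Icc _ _, fun f hf =>
    ⟨condExp_symmMS_ae_eq_symmAverage hs hss hf.integrable_sq,
      entropy_sub_entropy_condExp_symmMS hs hss hf.integrable_sq (fun _ => sq_nonneg _)⟩⟩

/-- There is a measurable `p : ℝ → [0,1]` such that for every `f ∈ L₂(μ)`, the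
`L₂`-symmetrization `f̂ = (E_μ[f²|F̂])^{1/2}` satisfies
`f̂²(x) = p(x) f²(x) + (1−p(x)) f²(s(x))` for `μ`-a.a. `x`, and, with
`ν_x = p(x) δ_x + (1−p(x)) δ_{s(x)}`,
`Ent_μ f² − Ent_μ f̂² = ∫ Ent_{ν_x}(f²) μ(dx)` whenever `f² log f²` is `μ`-integrable. -/
theorem symmetrization_entropy_decomposition
    (μ : Measure ℝ) [IsProbabilityMeasure μ] [NullSingletonClass μ]
    (a b : ℝ → ℝ) (hab0 : a 0 = b 0)
    (ha_cont : ContinuousOn a (Ico (0:ℝ) 1)) (hb_cont : ContinuousOn b (Ico (0:ℝ) 1))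
    (ha_anti : StrictAntiOn a (Ico (0:ℝ) 1)) (hb_mono : StrictMonoOn b (Ico (0:ℝ) 1))
    (ha_lim : Tendsto a (nhdsWithin 1 (Iio 1)) atBot)
    (hb_lim : Tendsto b (nhdsWithin 1 (Iio 1)) atTop)
    (hD_lt_one : ∀ t : ℝ, 0 ≤ t → t < 1 → μ (DI a b t) < 1) :
    ∃ p : ℝ → ℝ, Measurable p ∧ (∀ x, p x ∈ Icc (0:ℝ) 1) ∧
      ∀ f : ℝ → ℝ, MemLp f 2 μ →
        ((μ[(fun y => f y ^ 2)|symmMS (reflI a b)])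
            =ᵐ[μ] fun x => p x * f x ^ 2 + (1 - p x) * f (reflI a b x) ^ 2)
        ∧ (Integrable (fun x => f x ^ 2 * Real.log (f x ^ 2)) μ →
            entropy μ (fun x => f x ^ 2)
                - entropy μ (μ[(fun y => f y ^ 2)|symmMS (reflI a b)])
              = ∫ x, entropy
                  (ENNReal.ofReal (p x) • Measure.dirac x
                    + ENNReal.ofReal (1 - p x) • Measure.dirac (reflI a b x))
                  (fun y => f y ^ 2) ∂μ) :=
  symmetrization_entropy_decomposition_general μ a b hab0 ha_cont hb_cont ha_anti hb_mono ha_lim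
    hb_lim
end
end

section
/- Let μ be a probability measure on ℝ with everywhere positive density p_μ and cdf F_μ, and let s be the reflection map of the quantile trimmed regions. Then s(x) = F_μ^{−1}(1 − F_μ(x)) for all x, s is locally absolutely continuous on ℝ, and s′(x) = −p_μ(x)/p_μ(s(x)) for Lebesgue-almost every x. -/
open MeasureTheory Set Real Filter

noncomputable section

/-- The cumulative distribution function `F_μ(x) = μ((−∞,x])`. -/
def cdfR (μ : Measure ℝ) (x : ℝ) : ℝ := (μ (Iic x)).toReal

/-- The quantile function `q_v = F_μ^{−1}(v)`. -/
def quantile (μ : Measure ℝ) (v : ℝ) : ℝ := sInf {x | v ≤ cdfR μ x}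

/-- The quantile trimmed regions: `D_t = [q_{1/2−t/2}, q_{1/2+t/2}]` for `t ∈ [0,1)`
and `D_1 = ℝ`. -/
def DQ (μ : Measure ℝ) (t : ℝ) : Set ℝ :=
  if t < 1 then Icc (quantile μ (1/2 - t/2)) (quantile μ (1/2 + t/2)) else univ

/-- `τ(x) = inf {t ∈ [0,1] : x ∈ D_t}` for the quantile trimmed regions. -/
def tauQ (μ : Measure ℝ) (x : ℝ) : ℝ := sInf {t | t ∈ Icc (0:ℝ) 1 ∧ x ∈ DQ μ t}

/-- The reflection map of the quantile trimmed regions: for `x ≠ m` (the median),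
`s(x)` is the endpoint of `D_{τ(x)}` other than `x`, and `s(m) = m`. -/
def reflQ (μ : Measure ℝ) (x : ℝ) : ℝ :=
  if x < quantile μ (1/2) then quantile μ (1/2 + tauQ μ x / 2)
  else if quantile μ (1/2) < x then quantile μ (1/2 - tauQ μ x / 2)
  else quantile μ (1/2)

/-!
A measure with a positive density has no atoms and charges every interval, so `F = cdfR μ` is a
continuous increasing bijection `ℝ → (0,1)` whose inverse is `quantile μ`. Then
`τ(x) = |2F(x) - 1|`, hence `s = F⁻¹ ∘ (1 - F)`: a strictly decreasing involution preserving `μ`.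
Pushing `μ = p · Leb` through `s` turns `∫_{(u,v]} p(x) / p(s x) dx` into the `μ`-integral of
`1 / p` over `s((u,v]) = [s v, s u)`, which is `s u - s v`; the Lebesgue differentiation theorem
then gives the almost-everywhere derivative.
-/

open ProbabilityTheory

section Cdf

variable {μ : Measure ℝ} [IsProbabilityMeasure μ]

lemma cdfR_eq_cdf : cdfR μ = cdf μ := funext fun x => (cdf_eq_real μ x).symm

lemma continuous_cdfR [NullSingletonClass μ] : Continuous (cdfR μ) := by
  rw [cdfR_eq_cdf, continuous_iff_continuousAt]
  intro x
  have hleft : cdf μ x ≤ Function.leftLim (cdf μ) x := by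
    have h := (cdf μ).measure_singleton x
    rw [measure_cdf, measure_singleton, eq_comm, ENNReal.ofReal_eq_zero] at h
    linarith
  rw [(monotone_cdf μ).continuousAt_iff_leftLim_eq_rightLim, (cdf μ).rightLim_eq]
  exact le_antisymm ((monotone_cdf μ).leftLim_le le_rfl) hleft

lemma strictMono_cdfR (h : volume ≪ μ) : StrictMono (cdfR μ) := by
  intro u v huv
  have hpos : 0 < μ (Ioc u v) := pos_iff_ne_zero.mpr fun h0 => by
    simpa [huv.not_ge] using h h0
  have hIoc := (cdf μ).measure_Ioc u v
  rw [measure_cdf] at hIoc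
  rw [hIoc, ENNReal.ofReal_pos, sub_pos] at hpos
  rwa [cdfR_eq_cdf]

end Cdf

section Quantile

variable {μ : Measure ℝ} (hF : StrictMono (cdfR μ))
include hF

lemma quantile_cdfR (x : ℝ) : quantile μ (cdfR μ x) = x := by
  have : {y | cdfR μ x ≤ cdfR μ y} = Ici x := by
    ext y; simpa using hF.le_iff_le
  rw [quantile, this, csInf_Ici]

variable [IsProbabilityMeasure μ]

lemma cdfR_mem_Ioo (x : ℝ) : cdfR μ x ∈ Ioo (0 : ℝ) 1 := by
  rw [cdfR_eq_cdf] at hF ⊢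
  exact ⟨(cdf_nonneg μ (x - 1)).trans_lt (hF (by linarith)),
    (hF (by linarith : x < x + 1)).trans_le (cdf_le_one μ _)⟩

variable [NullSingletonClass μ]

lemma exists_cdfR_eq {v : ℝ} (hv : v ∈ Ioo (0 : ℝ) 1) : ∃ x, cdfR μ x = v := by
  obtain ⟨b, hb⟩ := ((tendsto_cdf_atTop μ).eventually (eventually_gt_nhds hv.2)).exists
  obtain ⟨a, ha⟩ := ((tendsto_cdf_atBot μ).eventually (eventually_lt_nhds hv.1)).exists
  rw [← cdfR_eq_cdf] at ha hb
  obtain ⟨x, -, hx⟩ := intermediate_value_Icc (hF.lt_iff_lt.mp (ha.trans hb)).le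
    continuous_cdfR.continuousOn ⟨ha.le, hb.le⟩
  exact ⟨x, hx⟩

lemma cdfR_quantile {v : ℝ} (hv : v ∈ Ioo (0 : ℝ) 1) : cdfR μ (quantile μ v) = v := by
  obtain ⟨x, rfl⟩ := exists_cdfR_eq hF hv
  rw [quantile_cdfR hF]

lemma quantile_le_iff {v x : ℝ} (hv : v ∈ Ioo (0 : ℝ) 1) :
    quantile μ v ≤ x ↔ v ≤ cdfR μ x := by
  obtain ⟨y, rfl⟩ := exists_cdfR_eq hF hv
  rw [quantile_cdfR hF, hF.le_iff_le]

lemma le_quantile_iff {v x : ℝ} (hv : v ∈ Ioo (0 : ℝ) 1) :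
    x ≤ quantile μ v ↔ cdfR μ x ≤ v := by
  obtain ⟨y, rfl⟩ := exists_cdfR_eq hF hv
  rw [quantile_cdfR hF, hF.le_iff_le]

lemma mem_DQ_iff {t x : ℝ} (ht : t ∈ Ico (0 : ℝ) 1) :
    x ∈ DQ μ t ↔ |2 * cdfR μ x - 1| ≤ t := by
  rw [DQ, if_pos ht.2, mem_Icc, quantile_le_iff hF ⟨by linarith [ht.2], by linarith [ht.1]⟩,
    le_quantile_iff hF ⟨by linarith [ht.1], by linarith [ht.2]⟩, abs_le]
  constructor <;> rintro ⟨h₁, h₂⟩ <;> constructor <;> linarith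

lemma tauQ_eq (x : ℝ) : tauQ μ x = |2 * cdfR μ x - 1| := by
  have hc0 : 0 ≤ |2 * cdfR μ x - 1| := abs_nonneg _
  have hc1 : |2 * cdfR μ x - 1| < 1 :=
    abs_lt.mpr ⟨by linarith [(cdfR_mem_Ioo hF x).1], by linarith [(cdfR_mem_Ioo hF x).2]⟩
  refine IsLeast.csInf_eq ⟨⟨⟨hc0, hc1.le⟩, (mem_DQ_iff hF ⟨hc0, hc1⟩).mpr le_rfl⟩, ?_⟩
  rintro t ⟨⟨ht0, ht1⟩, hx⟩
  rcases ht1.lt_or_eq with ht1 | rfl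
  · exact (mem_DQ_iff hF ⟨ht0, ht1⟩).mp hx
  · exact hc1.le

lemma reflQ_eq_quantile (x : ℝ) : reflQ μ x = quantile μ (1 - cdfR μ x) := by
  have hmedian : cdfR μ (quantile μ (1/2)) = 1/2 := cdfR_quantile hF (by norm_num)
  rw [reflQ, tauQ_eq hF]
  rcases lt_trichotomy x (quantile μ (1/2)) with h | rfl | h
  · have hFx := hF h
    rw [hmedian] at hFx
    rw [if_pos h, abs_of_neg (by linarith)]
    congr 1
    ring
  · rw [if_neg (lt_irrefl _), if_neg (lt_irrefl _), hmedian]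
    norm_num
  · have hFx := hF h
    rw [hmedian] at hFx
    rw [if_neg h.not_gt, if_pos h, abs_of_pos (by linarith)]
    congr 1
    ring

lemma cdfR_reflQ (x : ℝ) : cdfR μ (reflQ μ x) = 1 - cdfR μ x := by
  rw [reflQ_eq_quantile hF]
  exact cdfR_quantile hF ⟨by linarith [(cdfR_mem_Ioo hF x).2], by linarith [(cdfR_mem_Ioo hF x).1]⟩

lemma reflQ_involutive : Function.Involutive (reflQ μ) := fun x => by
  rw [reflQ_eq_quantile hF (reflQ μ x), cdfR_reflQ hF, sub_sub_cancel, quantile_cdfR hF]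

lemma reflQ_strictAnti : StrictAnti (reflQ μ) := fun a b hab => by
  rw [← hF.lt_iff_lt, cdfR_reflQ hF, cdfR_reflQ hF]
  linarith [hF hab]

lemma continuous_reflQ : Continuous (reflQ μ) :=
  Monotone.continuous_of_surjective (β := ℝᵒᵈ) (reflQ_strictAnti hF).antitone
    (reflQ_involutive hF).surjective

lemma measurePreserving_reflQ : MeasurePreserving (reflQ μ) μ μ := by
  have hmeas := (continuous_reflQ hF).measurable
  refine ⟨hmeas, Measure.ext_of_Iic _ _ fun a => ?_⟩
  have hpre : reflQ μ ⁻¹' Iic a = Ici (reflQ μ a) := by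
    ext x
    rw [mem_preimage, mem_Iic, mem_Ici, ← (reflQ_strictAnti hF).le_iff_ge,
      reflQ_involutive hF]
  rw [Measure.map_apply hmeas measurableSet_Iic, hpre, ← compl_Iio,
    prob_compl_eq_one_sub measurableSet_Iio, measure_congr Iio_ae_eq_Iic,
    ← ofReal_cdf, ← ofReal_cdf, ← cdfR_eq_cdf, cdfR_reflQ hF, ← ENNReal.ofReal_one,
    ← ENNReal.ofReal_sub _ (sub_pos.2 (cdfR_mem_Ioo hF a).2).le, sub_sub_cancel]

end Quantile

lemma preimage_Ico_of_strictAnti {s : ℝ → ℝ} (hs : StrictAnti s) (u v : ℝ) :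
    s ⁻¹' Ico (s v) (s u) = Ioc u v := by
  ext x
  rw [mem_preimage, mem_Ico, mem_Ioc, hs.le_iff_ge, hs.lt_iff_gt, and_comm]

section DensityRatio

variable {μ : Measure ℝ} {p s : ℝ → ℝ} (hp_pos : ∀ x, 0 < p x) (hp_meas : Measurable p)
  (hμ : μ = volume.withDensity fun x => ENNReal.ofReal (p x))
  (hs : MeasurePreserving s μ μ) (hs_anti : StrictAnti s)
include hp_pos hp_meas hμ hs hs_anti

lemma setLIntegral_Ioc_density_ratio (u v : ℝ) :
    ∫⁻ x in Ioc u v, ENNReal.ofReal (p x / p (s x)) = ENNReal.ofReal (s u - s v) := by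
  have hinv_meas : Measurable fun y => (ENNReal.ofReal (p y))⁻¹ := hp_meas.ennreal_ofReal.inv
  calc ∫⁻ x in Ioc u v, ENNReal.ofReal (p x / p (s x))
      = ∫⁻ x in Ioc u v, ENNReal.ofReal (p x) * (ENNReal.ofReal (p (s x)))⁻¹ := by
        simp_rw [ENNReal.ofReal_div_of_pos (hp_pos _), div_eq_mul_inv]
    _ = ∫⁻ x in s ⁻¹' Ico (s v) (s u), (ENNReal.ofReal (p (s x)))⁻¹ ∂μ := by
        rw [preimage_Ico_of_strictAnti hs_anti, hμ]
        exact (setLIntegral_withDensity_eq_setLIntegral_mul _ hp_meas.ennreal_ofReal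
          (hinv_meas.comp hs.measurable) measurableSet_Ioc).symm
    _ = ∫⁻ y in Ico (s v) (s u), (ENNReal.ofReal (p y))⁻¹ ∂μ :=
        hs.setLIntegral_comp_preimage measurableSet_Ico hinv_meas
    _ = ∫⁻ y in Ico (s v) (s u), 1 := by
        rw [hμ, setLIntegral_withDensity_eq_setLIntegral_mul _ hp_meas.ennreal_ofReal hinv_meas
          measurableSet_Ico]
        refine setLIntegral_congr_fun measurableSet_Ico fun y _ => ?_
        exact ENNReal.mul_inv_cancel (ENNReal.ofReal_pos.mpr (hp_pos y)).ne' ENNReal.ofReal_ne_top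
    _ = ENNReal.ofReal (s u - s v) := by simp [Real.volume_Ico]

lemma integrableOn_Ioc_neg_density_ratio (u v : ℝ) :
    IntegrableOn (fun x => -p x / p (s x)) (Ioc u v) := by
  simp_rw [neg_div]
  refine Integrable.neg ⟨(hp_meas.div (hp_meas.comp hs.measurable)).aestronglyMeasurable, ?_⟩
  rw [hasFiniteIntegral_iff_ofReal (ae_of_all _ fun x => (div_pos (hp_pos x) (hp_pos _)).le),
    setLIntegral_Ioc_density_ratio hp_pos hp_meas hμ hs hs_anti]
  exact ENNReal.ofReal_lt_top

lemma intervalIntegrable_neg_density_ratio (u v : ℝ) :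
    IntervalIntegrable (fun x => -p x / p (s x)) volume u v :=
  ⟨integrableOn_Ioc_neg_density_ratio hp_pos hp_meas hμ hs hs_anti u v,
    integrableOn_Ioc_neg_density_ratio hp_pos hp_meas hμ hs hs_anti v u⟩

lemma locallyIntegrable_neg_density_ratio :
    LocallyIntegrable (fun x => -p x / p (s x)) volume := fun x =>
  ⟨Ioc (x - 1) (x + 1), Ioc_mem_nhds (by linarith) (by linarith),
    integrableOn_Ioc_neg_density_ratio hp_pos hp_meas hμ hs hs_anti _ _⟩

lemma integral_density_ratio {u v : ℝ} (huv : u ≤ v) :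
    ∫ x in u..v, p x / p (s x) = s u - s v := by
  rw [intervalIntegral.integral_of_le huv, integral_eq_lintegral_of_nonneg_ae
      (ae_of_all _ fun x => (div_pos (hp_pos x) (hp_pos _)).le)
      (hp_meas.div (hp_meas.comp hs.measurable)).aestronglyMeasurable,
    setLIntegral_Ioc_density_ratio hp_pos hp_meas hμ hs hs_anti,
    ENNReal.toReal_ofReal (sub_nonneg.mpr (hs_anti.antitone huv))]

lemma integral_neg_density_ratio (u v : ℝ) :
    ∫ x in u..v, -p x / p (s x) = s v - s u := by
  simp_rw [neg_div, intervalIntegral.integral_neg]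
  rcases le_total u v with huv | hvu
  · rw [integral_density_ratio hp_pos hp_meas hμ hs hs_anti huv, neg_sub]
  · rw [intervalIntegral.integral_symm, integral_density_ratio hp_pos hp_meas hμ hs hs_anti hvu,
      neg_neg]

lemma ae_hasDerivAt_neg_density_ratio :
    ∀ᵐ x, HasDerivAt s (-p x / p (s x)) x := by
  filter_upwards [LocallyIntegrable.ae_hasDerivAt_integral
    (locallyIntegrable_neg_density_ratio hp_pos hp_meas hμ hs hs_anti)] with x hx
  have hprimitive : (fun y => (∫ t in (0 : ℝ)..y, -p t / p (s t)) + s 0) = s := by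
    ext y
    rw [integral_neg_density_ratio hp_pos hp_meas hμ hs hs_anti, sub_add_cancel]
  simpa only [hprimitive] using (hx 0).add_const (s 0)

end DensityRatio

/-- Identities (17) and (18): the reflection map of the quantile trimmed regions satisfies
`s(x) = F_μ^{−1}(1 − F_μ(x))` for all `x`; `s` is locally absolutely continuous on `ℝ`
(encoded by the fundamental theorem of calculus with locally integrable integrand), and
`s′(x) = −p_μ(x)/p_μ(s(x))` for (Lebesgue-)almost every `x`. -/
theorem reflQ_formula_and_derivative
    (μ : Measure ℝ) [IsProbabilityMeasure μ]
    (pμ : ℝ → ℝ) (hpμ_pos : ∀ x, 0 < pμ x) (hpμ_meas : Measurable pμ)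
    (hμ : μ = volume.withDensity fun x => ENNReal.ofReal (pμ x)) :
    (∀ x, reflQ μ x = quantile μ (1 - cdfR μ x))
    ∧ (∀ u v : ℝ, IntervalIntegrable (fun x => -(pμ x) / pμ (reflQ μ x)) volume u v)
    ∧ (∀ u v : ℝ, ∫ x in u..v, (-(pμ x) / pμ (reflQ μ x)) = reflQ μ v - reflQ μ u)
    ∧ (∀ᵐ x ∂volume, HasDerivAt (reflQ μ) (-(pμ x) / pμ (reflQ μ x)) x) := by
  have hac : volume ≪ μ := hμ ▸ withDensity_absolutelyContinuous'
    hpμ_meas.ennreal_ofReal.aemeasurable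
    (ae_of_all _ fun x => (ENNReal.ofReal_pos.mpr (hpμ_pos x)).ne')
  have : NullSingletonClass μ := hμ ▸ inferInstance
  have hF := strictMono_cdfR hac
  have hs := measurePreserving_reflQ hF
  have hs_anti := reflQ_strictAnti hF
  exact ⟨reflQ_eq_quantile hF,
    intervalIntegrable_neg_density_ratio hpμ_pos hpμ_meas hμ hs hs_anti,
    integral_neg_density_ratio hpμ_pos hpμ_meas hμ hs hs_anti,
    ae_hasDerivAt_neg_density_ratio hpμ_pos hpμ_meas hμ hs hs_anti⟩
end
end
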